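/- arXiv:2411.08601 — 11 statements merged into one kernel-verified Lean document; each statement's English description precedes it below -/
import Mathlib

section
/- If x is obtained from y by a Pigou-Dalton progressive transfer, then for every convex weighting function f in the class F, the extended Gini social welfare satisfies W_f(x) ≥ W_f(y), where W_f(z) = ∑_{i=1}^n [f((n−i+1)/n) − f((n−i)/n)] z_i. -/
/-- `x` is obtained from `y` by a Pigou-Dalton progressive transfer. -/
def PigouDalton {n : ℕ} (x y : Fin n → ℝ) : Prop :=
  Monotone x ∧ Monotone y ∧
  ∃ δ : ℝ, 0 < δ ∧ ∃ h k : Fin n, h < k ∧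
    x h = y h + δ ∧ x k = y k - δ ∧ ∀ g : Fin n, g ≠ h → g ≠ k → x g = y g

/-- Membership in the class F: `f : [0,1] → [0,1]` continuous, nondecreasing,
with `f 0 = 0` and `f 1 = 1`. -/
def MemF (f : ℝ → ℝ) : Prop :=
  ContinuousOn f (Set.Icc 0 1) ∧ MonotoneOn f (Set.Icc 0 1) ∧
  f 0 = 0 ∧ f 1 = 1 ∧ ∀ t ∈ Set.Icc (0 : ℝ) 1, f t ∈ Set.Icc (0 : ℝ) 1

/-- Extended Gini social welfare. Index `i : Fin n` corresponds to position
`i+1` in the paper, so weights are `f((n-i)/n) - f((n-i-1)/n)`. -/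
noncomputable def W {n : ℕ} (f : ℝ → ℝ) (z : Fin n → ℝ) : ℝ :=
  ∑ i : Fin n, (f (((n : ℝ) - (i : ℕ)) / n) - f (((n : ℝ) - (i : ℕ) - 1) / n)) * z i

/-!
A progressive transfer of `δ` from position `k` to a poorer position `h < k` changes any
rank-weighted sum `∑ wᵢ zᵢ` by `δ (w_h - w_k)`. For the extended Gini welfare the weight of
position `i` is the increment of `f` over `[(n-i-1)/n, (n-i)/n]`; convexity of `f` makes these
increments grow to the right, i.e. the weights decrease with rank, so `w_h ≥ w_k`.
-/

open Finset

lemma ConvexOn.sub_le_sub_of_sub_eq {s : Set ℝ} {f : ℝ → ℝ} (hf : ConvexOn ℝ s f)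
    {a b c d : ℝ} (ha : a ∈ s) (hd : d ∈ s) (hab : a < b) (hbc : b ≤ c) (hcd : c < d)
    (hlen : b - a = d - c) :
    f b - f a ≤ f d - f c := by
  have hslope : (f b - f a) / (b - a) ≤ (f d - f c) / (d - c) :=
    (hf.secant_mono_aux2 ha hd hab (hbc.trans_lt hcd)).trans
      (hf.secant_mono_aux3 ha hd (hab.trans_le hbc) hcd)
  rwa [hlen, div_le_div_iff_of_pos_right (sub_pos.2 hcd)] at hslope

lemma sum_mul_eq_add_of_transfer {ι : Type*} [Fintype ι] (w x y : ι → ℝ) {h k : ι}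
    (hhk : h ≠ k) {δ : ℝ} (hxh : x h = y h + δ) (hxk : x k = y k - δ)
    (hother : ∀ g, g ≠ h → g ≠ k → x g = y g) :
    ∑ i, w i * x i = ∑ i, w i * y i + δ * (w h - w k) := by
  have hdiff : ∑ i, w i * (x i - y i) = w h * (x h - y h) + w k * (x k - y k) :=
    sum_eq_add_of_mem h k (mem_univ h) (mem_univ k) hhk fun g _ ⟨hgh, hgk⟩ => by
      rw [hother g hgh hgk, sub_self, mul_zero]
  simp only [mul_sub, sum_sub_distrib, hxh, hxk] at hdiff
  linarith

noncomputable def giniWeight (f : ℝ → ℝ) (n i : ℕ) : ℝ :=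
  f (((n : ℝ) - i) / n) - f (((n : ℝ) - i - 1) / n)

lemma W_eq_sum_giniWeight {n : ℕ} (f : ℝ → ℝ) (z : Fin n → ℝ) :
    W f z = ∑ i : Fin n, giniWeight f n i * z i :=
  rfl

lemma giniWeight_le_of_lt {f : ℝ → ℝ} (hf : ConvexOn ℝ (Set.Icc 0 1) f) {n i j : ℕ}
    (hij : i < j) (hjn : j < n) :
    giniWeight f n j ≤ giniWeight f n i := by
  have hn : (0 : ℝ) < n := by exact_mod_cast (Nat.zero_le j).trans_lt hjn
  have hij' : (i : ℝ) + 1 ≤ j := by exact_mod_cast hij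
  have hjn' : (j : ℝ) + 1 ≤ n := by exact_mod_cast hjn
  have hi : (0 : ℝ) ≤ i := i.cast_nonneg
  apply hf.sub_le_sub_of_sub_eq
  · exact ⟨div_nonneg (by linarith) hn.le, (div_le_one hn).2 (by linarith)⟩
  · exact ⟨div_nonneg (by linarith) hn.le, (div_le_one hn).2 (by linarith)⟩
  · exact div_lt_div_of_pos_right (by linarith) hn
  · exact div_le_div_of_nonneg_right (by linarith) hn.le
  · exact div_lt_div_of_pos_right (by linarith) hn
  · ring

theorem stmt2_general {n : ℕ} (x y : Fin n → ℝ)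
    (hPD : PigouDalton x y)
    (f : ℝ → ℝ) (hconv : ConvexOn ℝ (Set.Icc 0 1) f) :
    W f x ≥ W f y := by
  obtain ⟨-, -, δ, hδ, h, k, hhk, hxh, hxk, hother⟩ := hPD
  have hweight : giniWeight f n k ≤ giniWeight f n h := giniWeight_le_of_lt hconv hhk k.isLt
  rw [W_eq_sum_giniWeight, W_eq_sum_giniWeight,
    sum_mul_eq_add_of_transfer _ x y hhk.ne hxh hxk hother]
  exact le_add_of_nonneg_right (mul_nonneg hδ.le (sub_nonneg.2 hweight))

theorem stmt2 {n : ℕ} (hn : 2 ≤ n) (x y : Fin n → ℝ)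
    (hPD : PigouDalton x y)
    (f : ℝ → ℝ) (hF : MemF f) (hconv : ConvexOn ℝ (Set.Icc 0 1) f) :
    W f x ≥ W f y :=
  stmt2_general x y hPD f hconv
end

section
/- Let x and y be nondecreasing income distributions of size n with equal means. If for every continuous, nondecreasing, concave function u : ℝ → ℝ one has ∑_{i=1}^n u(x_i) ≥ ∑_{i=1}^n u(y_i), then for every h = 1,…,n−1, ∑_{i=1}^{h} x_i ≥ ∑_{i=1}^{h} y_i. -/
theorem stmt3 {n : ℕ} (hn : 2 ≤ n) (x y : Fin n → ℝ)
    (hx : Monotone x) (hy : Monotone y)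
    (hmean : (∑ i : Fin n, x i) / n = (∑ i : Fin n, y i) / n)
    (hW : ∀ u : ℝ → ℝ, Continuous u → Monotone u → ConcaveOn ℝ Set.univ u →
      ∑ i : Fin n, u (x i) ≥ ∑ i : Fin n, u (y i)) :
    ∀ h : ℕ, 1 ≤ h → h ≤ n - 1 →
      ∑ i ∈ Finset.univ.filter (fun i : Fin n => (i : ℕ) < h), x i ≥
      ∑ i ∈ Finset.univ.filter (fun i : Fin n => (i : ℕ) < h), y i := by
  intro h h1 hle
  have hhn : h - 1 < n := by omega
  set c : ℝ := y ⟨h - 1, hhn⟩ with hc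
  set u : ℝ → ℝ := fun t => min t c with hu
  have hcont : Continuous u := continuous_id.min continuous_const
  have hmono : Monotone u := fun a b hab => min_le_min hab le_rfl
  have hconc : ConcaveOn ℝ Set.univ u := by
    have h1 : ConcaveOn ℝ (Set.univ : Set ℝ) (fun t => t) :=
      (LinearMap.id : ℝ →ₗ[ℝ] ℝ).concaveOn convex_univ
    have h2 : ConcaveOn ℝ (Set.univ : Set ℝ) (fun _ => c) := concaveOn_const c convex_univ
    exact h1.inf h2
  have key := hW u hcont hmono hconc
  set S := Finset.univ.filter (fun i : Fin n => (i : ℕ) < h) with hS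
  have hxsplit : ∑ i : Fin n, u (x i) =
      ∑ i ∈ S, u (x i) + ∑ i ∈ Finset.univ.filter (fun i : Fin n => ¬ (i : ℕ) < h), u (x i) :=
    (Finset.sum_filter_add_sum_filter_not _ _ _).symm
  have hysplit : ∑ i : Fin n, u (y i) =
      ∑ i ∈ S, u (y i) + ∑ i ∈ Finset.univ.filter (fun i : Fin n => ¬ (i : ℕ) < h), u (y i) :=
    (Finset.sum_filter_add_sum_filter_not _ _ _).symm
  have hx1 : ∑ i ∈ S, u (x i) ≤ ∑ i ∈ S, x i :=
    Finset.sum_le_sum fun i _ => min_le_left _ _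
  have hx2 : ∑ i ∈ Finset.univ.filter (fun i : Fin n => ¬ (i : ℕ) < h), u (x i) ≤
      ∑ i ∈ Finset.univ.filter (fun i : Fin n => ¬ (i : ℕ) < h), c :=
    Finset.sum_le_sum fun i _ => min_le_right _ _
  have hy1 : ∑ i ∈ S, u (y i) = ∑ i ∈ S, y i := by
    refine Finset.sum_congr rfl fun i hi => ?_
    simp only [hS, Finset.mem_filter] at hi
    have : y i ≤ c := hy (by simp [Fin.le_def]; omega)
    simp [hu, this]
  have hy2 : ∑ i ∈ Finset.univ.filter (fun i : Fin n => ¬ (i : ℕ) < h), u (y i) =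
      ∑ i ∈ Finset.univ.filter (fun i : Fin n => ¬ (i : ℕ) < h), c := by
    refine Finset.sum_congr rfl fun i hi => ?_
    simp only [Finset.mem_filter] at hi
    have : c ≤ y i := hy (by simp [Fin.le_def]; omega)
    simp [hu, this]
  rw [hxsplit, hysplit, hy1, hy2] at key
  linarith
end

section
/- Let x and y be nondecreasing income distributions of size n with equal means. If for every convex weighting function f in the class F one has W_f(x) ≥ W_f(y), then for every h = 1,…,n−1, ∑_{i=1}^{h} x_i ≥ ∑_{i=1}^{h} y_i. -/
/-!
For `1 ≤ h < n` the convex function `f t = max 0 ((t - a) / (1 - a))` with `a = 1 - h / n`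
vanishes up to `a` and rises linearly to `f 1 = 1`. It puts the weight `1 / h` on each of the
`h` poorest incomes and nothing on the others, so `W f z` is the mean of the `h` poorest incomes
of `z`, and `W f x ≥ W f y` is the claimed inequality.
-/

open Finset

noncomputable def ramp (a t : ℝ) : ℝ := max 0 ((t - a) / (1 - a))

theorem continuous_ramp (a : ℝ) : Continuous (ramp a) := by
  unfold ramp; fun_prop

theorem monotone_ramp {a : ℝ} (ha : a < 1) : Monotone (ramp a) :=
  fun _ _ hst => max_le_max le_rfl (div_le_div_of_nonneg_right (by linarith) (by linarith))

theorem convexOn_ramp (a : ℝ) {s : Set ℝ} (hs : Convex ℝ s) : ConvexOn ℝ s (ramp a) := by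
  have haffine : ConvexOn ℝ s fun t => (t - a) / (1 - a) := by
    have hlin := ((LinearMap.lsmul ℝ ℝ (1 - a)⁻¹).convexOn hs).add_const (-(a / (1 - a)))
    refine hlin.congr fun t _ => ?_
    simp only [Pi.add_apply, LinearMap.lsmul_apply, smul_eq_mul]
    ring
  exact (convexOn_const 0 hs).sup haffine

theorem ramp_zero {a : ℝ} (ha0 : 0 ≤ a) (ha1 : a < 1) : ramp a 0 = 0 :=
  max_eq_left (div_nonpos_of_nonpos_of_nonneg (by linarith) (by linarith))

theorem ramp_one {a : ℝ} (ha : a < 1) : ramp a 1 = 1 := by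
  simp [ramp, div_self (sub_ne_zero.2 ha.ne')]

theorem memF_ramp {a : ℝ} (ha0 : 0 ≤ a) (ha1 : a < 1) : MemF (ramp a) :=
  ⟨(continuous_ramp a).continuousOn, (monotone_ramp ha1).monotoneOn _, ramp_zero ha0 ha1,
    ramp_one ha1, fun _ ht =>
      ⟨le_max_left _ _, (monotone_ramp ha1 ht.2).trans_eq (ramp_one ha1)⟩⟩

theorem ramp_one_sub_div {n h : ℝ} (hn : n ≠ 0) (hh : h ≠ 0) (m : ℝ) :
    ramp (1 - h / n) (m / n) = max 0 ((m - (n - h)) / h) := by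
  unfold ramp
  rw [sub_sub_cancel]
  congr 1
  field_simp

theorem W_ramp {n h : ℕ} (hn : n ≠ 0) (hh : h ≠ 0) (z : Fin n → ℝ) :
    W (ramp (1 - h / n)) z = (∑ i ∈ univ.filter (fun i : Fin n => (i : ℕ) < h), z i) / h := by
  have hn' : (n : ℝ) ≠ 0 := Nat.cast_ne_zero.2 hn
  have hh' : (0 : ℝ) < h := Nat.cast_pos.2 (Nat.pos_of_ne_zero hh)
  rw [W, sum_filter, sum_div]
  refine sum_congr rfl fun i _ => ?_
  rw [ramp_one_sub_div hn' hh'.ne', ramp_one_sub_div hn' hh'.ne']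
  split_ifs with hi
  · have hi' : ((i : ℕ) : ℝ) + 1 ≤ h := by exact_mod_cast hi
    rw [max_eq_right (div_nonneg (by linarith) hh'.le),
      max_eq_right (div_nonneg (by linarith) hh'.le)]
    field_simp
    ring
  · have hi' : (h : ℝ) ≤ (i : ℕ) := by exact_mod_cast not_lt.1 hi
    rw [max_eq_left (div_nonpos_of_nonpos_of_nonneg (by linarith) hh'.le),
      max_eq_left (div_nonpos_of_nonpos_of_nonneg (by linarith) hh'.le)]
    simp

theorem stmt4_general {n : ℕ} (x y : Fin n → ℝ)
    (hW : ∀ f : ℝ → ℝ, MemF f → ConvexOn ℝ (Set.Icc 0 1) f → W f x ≥ W f y) :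
    ∀ h : ℕ, 1 ≤ h → h ≤ n - 1 →
      ∑ i ∈ Finset.univ.filter (fun i : Fin n => (i : ℕ) < h), x i ≥
      ∑ i ∈ Finset.univ.filter (fun i : Fin n => (i : ℕ) < h), y i := by
  intro h h1 hle
  have hh : (0 : ℝ) < h := Nat.cast_pos.2 h1
  have hhn : (h : ℝ) < n := by exact_mod_cast (show h < n by omega)
  have ha0 : 0 ≤ 1 - (h : ℝ) / n := sub_nonneg.2 ((div_le_one (hh.trans hhn)).2 hhn.le)
  have ha1 : 1 - (h : ℝ) / n < 1 := sub_lt_self 1 (div_pos hh (hh.trans hhn))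
  have hW_ramp := hW (ramp (1 - h / n)) (memF_ramp ha0 ha1) (convexOn_ramp _ (convex_Icc 0 1))
  rw [W_ramp (by omega) (by omega), W_ramp (by omega) (by omega)] at hW_ramp
  exact (div_le_div_iff_of_pos_right hh).1 hW_ramp

theorem stmt4 {n : ℕ} (hn : 2 ≤ n) (x y : Fin n → ℝ)
    (hx : Monotone x) (hy : Monotone y)
    (hmean : (∑ i : Fin n, x i) / n = (∑ i : Fin n, y i) / n)
    (hW : ∀ f : ℝ → ℝ, MemF f → ConvexOn ℝ (Set.Icc 0 1) f → W f x ≥ W f y) :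
    ∀ h : ℕ, 1 ≤ h → h ≤ n - 1 →
      ∑ i ∈ Finset.univ.filter (fun i : Fin n => (i : ℕ) < h), x i ≥
      ∑ i ∈ Finset.univ.filter (fun i : Fin n => (i : ℕ) < h), y i :=
  stmt4_general x y hW
end

section
/- (Hardy–Littlewood–Pólya implementation) Let x and y be nondecreasing income distributions of size n with equal means. If ∑_{i=1}^{h} x_i ≥ ∑_{i=1}^{h} y_i for every h = 1,…,n−1, then x can be obtained from y by a finite sequence of Pigou-Dalton progressive transfers; that is, there is a finite chain y = z^0, z^1, …, z^m = x of nondecreasing distributions in which each z^{j+1} either equals z^j or is obtained from z^j by a Pigou-Dalton progressive transfer. -/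
namespace HLPaux

variable {n : ℕ}

noncomputable def Psum (f : Fin n → ℝ) (p : ℕ) : ℝ :=
  ∑ i ∈ Finset.univ.filter (fun i : Fin n => (i : ℕ) < p), f i

lemma Psum_zero (f : Fin n → ℝ) : Psum f 0 = 0 := by
  simp [Psum]

lemma Psum_n (f : Fin n → ℝ) : Psum f n = ∑ i, f i := by
  unfold Psum
  congr 1
  ext i
  simp [i.isLt]

lemma Psum_split (f : Fin n → ℝ) {q p : ℕ} (hqp : q ≤ p) :
    Psum f p = Psum f q +
      ∑ i ∈ Finset.univ.filter (fun i : Fin n => q ≤ (i : ℕ) ∧ (i : ℕ) < p), f i := by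
  unfold Psum
  rw [← Finset.sum_filter_add_sum_filter_not
    (Finset.univ.filter (fun i : Fin n => (i : ℕ) < p)) (fun i => (i : ℕ) < q)]
  congr 1
  · congr 1
    ext i
    simp only [Finset.mem_filter, Finset.mem_univ, true_and]
    omega
  · congr 1
    ext i
    simp only [Finset.mem_filter, Finset.mem_univ, true_and, not_lt]
    omega

lemma Psum_succ (f : Fin n → ℝ) {p : ℕ} (hp : p < n) :
    Psum f (p + 1) = Psum f p + f ⟨p, hp⟩ := by
  rw [Psum_split f (Nat.le_succ p)]
  congr 1
  have : Finset.univ.filter (fun i : Fin n => p ≤ (i : ℕ) ∧ (i : ℕ) < p + 1) = {⟨p, hp⟩} := by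
    ext i
    simp only [Finset.mem_filter, Finset.mem_univ, true_and, Finset.mem_singleton, Fin.ext_iff]
    omega
  rw [this, Finset.sum_singleton]

lemma main (x : Fin n → ℝ) (hx : Monotone x) :
    ∀ d : ℕ, ∀ y : Fin n → ℝ, Monotone y →
    (∑ i, y i = ∑ i, x i) →
    (∀ p : ℕ, p ≤ n → Psum y p ≤ Psum x p) →
    ((Finset.univ.filter fun i => y i ≠ x i).card ≤ d) →
    ∃ (m : ℕ) (z : ℕ → Fin n → ℝ), z 0 = y ∧ z m = x ∧
      (∀ j : ℕ, j ≤ m → Monotone (z j)) ∧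
      (∀ j : ℕ, j < m → z (j + 1) = z j ∨ PigouDalton (z (j + 1)) (z j)) := by
  intro d
  induction d with
  | zero =>
    intro y hy hsum hdom hcard
    have hfin : Finset.univ.filter (fun i => y i ≠ x i) = ∅ :=
      Finset.card_eq_zero.mp (Nat.le_zero.mp hcard)
    have hyx : y = x := by
      funext i
      by_contra hne
      have : i ∈ Finset.univ.filter (fun i => y i ≠ x i) := by
        simp [hne]
      rw [hfin] at this
      exact absurd this (Finset.notMem_empty i)
    exact ⟨0, fun _ => y, rfl, by rw [hyx], fun j _ => hy, fun j hj => absurd hj (Nat.not_lt_zero j)⟩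
  | succ d ih =>
    intro y hy hsum hdom hcard
    by_cases hyx : y = x
    · exact ⟨0, fun _ => y, rfl, by rw [hyx], fun j _ => hy, fun j hj => absurd hj (Nat.not_lt_zero j)⟩
    -- the set where y exceeds x is nonempty
    have hSne : (Finset.univ.filter fun i => x i < y i).Nonempty := by
      by_contra hS
      rw [Finset.not_nonempty_iff_eq_empty] at hS
      have hle : ∀ i ∈ Finset.univ, y i ≤ x i := by
        intro i _
        by_contra hgt
        have : i ∈ Finset.univ.filter fun i => x i < y i := by
          simp [lt_of_not_ge hgt]
        rw [hS] at this
        exact absurd this (Finset.notMem_empty i)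
      have heq := (Finset.sum_eq_sum_iff_of_le hle).mp hsum
      exact hyx (funext fun i => heq i (Finset.mem_univ i))
    set S := Finset.univ.filter fun i => x i < y i with hSdef
    set k : Fin n := S.min' hSne with hkdef
    have hkS : k ∈ S := S.min'_mem hSne
    have hky : x k < y k := by
      have := hkS
      rw [hSdef, Finset.mem_filter] at this
      exact this.2
    have hAle : ∀ i : Fin n, i < k → y i ≤ x i := by
      intro i hik
      by_contra hgt
      have hiS : i ∈ S := by
        rw [hSdef, Finset.mem_filter]
        exact ⟨Finset.mem_univ i, lt_of_not_ge hgt⟩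
      exact absurd (S.min'_le i hiS) (not_le.mpr hik)
    -- existence of a strictly dominated index below k
    have hBex : ∃ h : Fin n, h < k ∧ y h < x h := by
      by_contra hB
      push_neg at hB
      have heqlt : ∀ i : Fin n, i < k → y i = x i := fun i hik =>
        le_antisymm (hAle i hik) (hB i hik)
      have hPk : Psum y (k : ℕ) = Psum x (k : ℕ) := by
        unfold Psum
        apply Finset.sum_congr rfl
        intro i hi
        rw [Finset.mem_filter] at hi
        exact heqlt i (Fin.lt_def.mpr hi.2)
      have hk1 : ((k : ℕ) + 1) ≤ n := k.isLt
      have hy1 := Psum_succ y k.isLt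
      have hx1 := Psum_succ x k.isLt
      rw [Fin.eta] at hy1 hx1
      have := hdom ((k : ℕ) + 1) hk1
      rw [hy1, hx1, hPk] at this
      linarith
    have hTne : (Finset.univ.filter fun i : Fin n => i < k ∧ y i < x i).Nonempty := by
      obtain ⟨h, hh1, hh2⟩ := hBex
      exact ⟨h, by simp [hh1, hh2]⟩
    set T := Finset.univ.filter fun i : Fin n => i < k ∧ y i < x i with hTdef
    set h : Fin n := T.max' hTne with hhdef
    have hhT : h ∈ T := T.max'_mem hTne
    have hhk : h < k := by
      have := hhT; rw [hTdef, Finset.mem_filter] at this; exact this.2.1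
    have hhy : y h < x h := by
      have := hhT; rw [hTdef, Finset.mem_filter] at this; exact this.2.2
    have hC : ∀ i : Fin n, h < i → i < k → y i = x i := by
      intro i hhi hik
      refine le_antisymm (hAle i hik) ?_
      by_contra hgt
      have hiT : i ∈ T := by
        rw [hTdef, Finset.mem_filter]
        exact ⟨Finset.mem_univ i, hik, lt_of_not_ge hgt⟩
      exact absurd (T.le_max' i hiT) (not_le.mpr hhi)
    have hhkne : h ≠ k := ne_of_lt hhk
    set δ : ℝ := min (x h - y h) (y k - x k) with hδdef
    have hδpos : 0 < δ := lt_min (by linarith) (by linarith)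
    have hδ1 : δ ≤ x h - y h := min_le_left _ _
    have hδ2 : δ ≤ y k - x k := min_le_right _ _
    set z' : Fin n → ℝ :=
      fun i => y i + ((if i = h then δ else 0) + (if i = k then -δ else 0)) with hz'def
    have hz'h : z' h = y h + δ := by simp [hz'def, hhkne]
    have hz'k : z' k = y k - δ := by
      simp [hz'def, Ne.symm hhkne]
      ring
    have hz'o : ∀ i : Fin n, i ≠ h → i ≠ k → z' i = y i := by
      intro i h1 h2
      simp [hz'def, h1, h2]
    have hz'h_le : z' h ≤ x h := by rw [hz'h]; linarith
    have hz'k_ge : x k ≤ z' k := by rw [hz'k]; linarith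
    -- monotonicity of z'
    have hmonoz' : Monotone z' := by
      intro i j hij
      rcases eq_or_lt_of_le hij with rfl | hlt
      · exact le_refl _
      by_cases hih : i = h
      · subst hih
        by_cases hjk : j = k
        · subst hjk
          calc z' h ≤ x h := hz'h_le
            _ ≤ x k := hx (le_of_lt hlt)
            _ ≤ z' k := hz'k_ge
        · have hjh : j ≠ h := ne_of_gt hlt
          rw [hz'o j hjh hjk]
          by_cases hjk2 : j < k
          · have hje := hC j hlt hjk2
            calc z' h ≤ x h := hz'h_le
              _ ≤ x j := hx (le_of_lt hlt)
              _ = y j := hje.symm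
          · have hkj : k < j := lt_of_le_of_ne (not_lt.mp hjk2) (Ne.symm hjk)
            exact le_of_lt (calc z' h ≤ x h := hz'h_le
              _ ≤ x k := hx (le_of_lt hhk)
              _ < y k := hky
              _ ≤ y j := hy (le_of_lt hkj))
      by_cases hik : i = k
      · subst hik
        have hjh : j ≠ h := ne_of_gt (lt_trans hhk hlt)
        have hjk : j ≠ k := ne_of_gt hlt
        rw [hz'o j hjh hjk, hz'k]
        have := hy (le_of_lt hlt)
        linarith
      rw [hz'o i hih hik]
      by_cases hjh : j = h
      · subst hjh
        rw [hz'h]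
        have := hy (le_of_lt hlt)
        linarith
      by_cases hjk : j = k
      · subst hjk
        by_cases hhi : h < i
        · have hie := hC i hhi hlt
          calc y i = x i := hie
            _ ≤ x k := hx (le_of_lt hlt)
            _ ≤ z' k := hz'k_ge
        · have hih2 : i < h := lt_of_le_of_ne (not_lt.mp hhi) hih
          exact le_of_lt (calc y i ≤ y h := hy (le_of_lt hih2)
            _ < x h := hhy
            _ ≤ x k := hx (le_of_lt hhk)
            _ ≤ z' k := hz'k_ge)
      · rw [hz'o j hjh hjk]
        exact hy (le_of_lt hlt)
    -- partial sums of z'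
    have hPz' : ∀ p : ℕ, Psum z' p = Psum y p +
        ((if (h : ℕ) < p then δ else 0) + (if (k : ℕ) < p then -δ else 0)) := by
      intro p
      unfold Psum
      rw [hz'def]
      rw [Finset.sum_add_distrib, Finset.sum_add_distrib]
      rw [Finset.sum_ite_eq' _ h (fun _ => δ), Finset.sum_ite_eq' _ k (fun _ => -δ)]
      simp only [Finset.mem_filter, Finset.mem_univ, true_and]
    have hsumz' : ∑ i, z' i = ∑ i, x i := by
      have := hPz' n
      rw [Psum_n, Psum_n] at this
      rw [this, if_pos h.isLt, if_pos k.isLt, hsum]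
      ring
    -- dominance for z'
    have hdomz' : ∀ p : ℕ, p ≤ n → Psum z' p ≤ Psum x p := by
      intro p hp
      rw [hPz' p]
      by_cases hhp : (h : ℕ) < p
      · by_cases hkp : (k : ℕ) < p
        · rw [if_pos hhp, if_pos hkp]
          have := hdom p hp
          linarith
        · rw [if_pos hhp, if_neg hkp]
          -- h < p ≤ k
          have hpk : p ≤ (k : ℕ) := not_lt.mp hkp
          have hsplit_y := Psum_split y (show (h : ℕ) + 1 ≤ p from hhp)
          have hsplit_x := Psum_split x (show (h : ℕ) + 1 ≤ p from hhp)
          have hmid : ∑ i ∈ Finset.univ.filter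
                (fun i : Fin n => (h : ℕ) + 1 ≤ (i : ℕ) ∧ (i : ℕ) < p), y i =
              ∑ i ∈ Finset.univ.filter
                (fun i : Fin n => (h : ℕ) + 1 ≤ (i : ℕ) ∧ (i : ℕ) < p), x i := by
            apply Finset.sum_congr rfl
            intro i hi
            rw [Finset.mem_filter] at hi
            apply hC i
            · exact Fin.lt_def.mpr (by omega)
            · exact Fin.lt_def.mpr (by omega)
          have hy1 := Psum_succ y h.isLt
          have hx1 := Psum_succ x h.isLt
          rw [Fin.eta] at hy1 hx1
          have hdh := hdom (h : ℕ) (le_of_lt (lt_of_lt_of_le h.isLt (le_refl n)))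
          rw [hsplit_y, hsplit_x, hmid, hy1, hx1]
          linarith
      · have hkp : ¬ (k : ℕ) < p := by
          intro hkp
          exact hhp (lt_trans (Fin.lt_def.mp hhk) hkp)
        rw [if_neg hhp, if_neg hkp]
        have := hdom p hp
        linarith
    -- cardinality decreases
    have hhD : h ∈ Finset.univ.filter fun i => y i ≠ x i := by
      simp [ne_of_lt hhy]
    have hkD : k ∈ Finset.univ.filter fun i => y i ≠ x i := by
      simp [ne_of_gt hky]
    have hcardz' : (Finset.univ.filter fun i => z' i ≠ x i).card ≤ d := by
      obtain ⟨w, hwD, hzw⟩ : ∃ w : Fin n, w ∈ (Finset.univ.filter fun i => y i ≠ x i) ∧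
          z' w = x w := by
        rcases le_total (x h - y h) (y k - x k) with hc | hc
        · refine ⟨h, hhD, ?_⟩
          rw [hz'h, hδdef, min_eq_left hc]; ring
        · refine ⟨k, hkD, ?_⟩
          rw [hz'k, hδdef, min_eq_right hc]; ring
      have hsub : (Finset.univ.filter fun i => z' i ≠ x i) ⊆
          (Finset.univ.filter fun i => y i ≠ x i).erase w := by
        intro i hi
        rw [Finset.mem_filter] at hi
        rw [Finset.mem_erase]
        constructor
        · intro hiw; subst hiw; exact hi.2 hzw
        · rw [Finset.mem_filter]
          refine ⟨Finset.mem_univ i, ?_⟩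
          by_cases hih : i = h
          · subst hih; exact ne_of_lt hhy
          by_cases hik : i = k
          · subst hik; exact ne_of_gt hky
          · rw [← hz'o i hih hik]; exact hi.2
      have h1 := Finset.card_le_card hsub
      have h2 := Finset.card_erase_lt_of_mem hwD
      omega
    -- apply induction hypothesis
    obtain ⟨m, zs, hzs0, hzsm, hzsmono, hzsstep⟩ := ih z' hmonoz' hsumz' hdomz' hcardz'
    refine ⟨m + 1, fun j => if j = 0 then y else zs (j - 1), by simp, by simp [hzsm], ?_, ?_⟩
    · intro j hj
      by_cases hj0 : j = 0
      · simp [hj0, hy]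
      · simp only [hj0, if_neg]
        exact hzsmono (j - 1) (by omega)
    · intro j hj
      by_cases hj0 : j = 0
      · subst hj0
        simp only [Nat.add_sub_cancel, if_neg (Nat.one_ne_zero), if_pos rfl]
        rw [hzs0]
        right
        refine ⟨hmonoz', hy, δ, hδpos, h, k, hhk, hz'h, hz'k, hz'o⟩
      · have hj1 : 1 ≤ j := Nat.one_le_iff_ne_zero.mpr hj0
        have e1 : j + 1 - 1 = (j - 1) + 1 := by omega
        have e2 : j - 1 + 1 = j := by omega
        simp only [if_neg (Nat.succ_ne_zero j), if_neg hj0, e1]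
        exact hzsstep (j - 1) (by omega)

end HLPaux

theorem stmt5 {n : ℕ} (hn : 2 ≤ n) (x y : Fin n → ℝ)
    (hx : Monotone x) (hy : Monotone y)
    (hmean : (∑ i : Fin n, x i) / n = (∑ i : Fin n, y i) / n)
    (hdom : ∀ h : ℕ, 1 ≤ h → h ≤ n - 1 →
      ∑ i ∈ Finset.univ.filter (fun i : Fin n => (i : ℕ) < h), x i ≥
      ∑ i ∈ Finset.univ.filter (fun i : Fin n => (i : ℕ) < h), y i) :
    ∃ (m : ℕ) (z : ℕ → Fin n → ℝ), z 0 = y ∧ z m = x ∧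
      (∀ j : ℕ, j ≤ m → Monotone (z j)) ∧
      (∀ j : ℕ, j < m → z (j + 1) = z j ∨ PigouDalton (z (j + 1)) (z j)) := by
  have hnpos : 0 < n := lt_of_lt_of_le (by norm_num) hn
  have hn0 : (n : ℝ) ≠ 0 := Nat.cast_ne_zero.mpr (Nat.pos_iff_ne_zero.mp hnpos)
  have hsum : ∑ i, y i = ∑ i, x i := by
    field_simp at hmean
    linarith
  have hdom' : ∀ p : ℕ, p ≤ n → HLPaux.Psum y p ≤ HLPaux.Psum x p := by
    intro p hp
    rcases Nat.eq_zero_or_pos p with rfl | hp1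
    · rw [HLPaux.Psum_zero, HLPaux.Psum_zero]
    rcases eq_or_lt_of_le hp with rfl | hplt
    · rw [HLPaux.Psum_n, HLPaux.Psum_n, hsum]
    · exact hdom p hp1 (by omega)
  exact HLPaux.main x hx _ y hy hsum hdom' (le_refl _)
end

section
/- Let x and y be nondecreasing income distributions of size n with equal means, set x_0 = y_0 = 0 and d_i = (x_i − x_{i−1}) − (y_i − y_{i−1}) for i = 1,…,n. Then for every f in the class F, W_f(x) − W_f(y) = ∑_{i=2}^{n} [ f((n−i+1)/n) − (n−i+1)/n ] · d_i. -/
/-- Previous income `x_{i-1}`, with the convention `x_0 = 0`. -/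
def prev {n : ℕ} (x : Fin n → ℝ) (i : Fin n) : ℝ :=
  if h : (i : ℕ) = 0 then 0 else x ⟨(i : ℕ) - 1, by have := i.isLt; omega⟩

/-- Abel summation over `range n`. -/
lemma abel_sum (n : ℕ) (c Z : ℕ → ℝ) :
    ∑ i ∈ Finset.range n, c i * Z i
    = ∑ j ∈ Finset.range n, (∑ i ∈ Finset.Ico j n, c i) *
        (Z j - if j = 0 then 0 else Z (j - 1)) := by
  set P : ℕ → ℝ := fun j => if j = 0 then 0 else Z (j - 1) with hP
  have tel : ∀ k, ∑ j ∈ Finset.range (k + 1), (Z j - P j) = Z k := by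
    intro k
    induction k with
    | zero => simp [hP]
    | succ k ih =>
      rw [Finset.sum_range_succ, ih]
      simp [hP]
  calc ∑ i ∈ Finset.range n, c i * Z i
      = ∑ i ∈ Finset.range n, ∑ j ∈ Finset.range n,
          if j ≤ i then c i * (Z j - P j) else 0 := by
        refine Finset.sum_congr rfl fun i hi => ?_
        have hi' : i < n := Finset.mem_range.mp hi
        rw [← Finset.sum_filter]
        have he : (Finset.range n).filter (fun j => j ≤ i) = Finset.range (i + 1) := by
          ext k; simp only [Finset.mem_filter, Finset.mem_range]; omega
        rw [he, ← Finset.mul_sum, tel]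
    _ = ∑ j ∈ Finset.range n, ∑ i ∈ Finset.range n,
          if j ≤ i then c i * (Z j - P j) else 0 := Finset.sum_comm
    _ = ∑ j ∈ Finset.range n, (∑ i ∈ Finset.Ico j n, c i) * (Z j - P j) := by
        refine Finset.sum_congr rfl fun j hj => ?_
        rw [← Finset.sum_filter]
        have he : (Finset.range n).filter (fun i => j ≤ i) = Finset.Ico j n := by
          ext k; simp only [Finset.mem_filter, Finset.mem_range, Finset.mem_Ico]; omega
        rw [he, Finset.sum_mul]

theorem stmt11 {n : ℕ} (hn : 2 ≤ n) (x y : Fin n → ℝ)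
    (hx : Monotone x) (hy : Monotone y)
    (hmean : (∑ i : Fin n, x i) / n = (∑ i : Fin n, y i) / n)
    (f : ℝ → ℝ) (hF : MemF f) :
    W f x - W f y =
      ∑ i ∈ Finset.univ.filter (fun i : Fin n => 1 ≤ (i : ℕ)),
        (f (((n : ℝ) - (i : ℕ)) / n) - ((n : ℝ) - (i : ℕ)) / n) *
          ((x i - prev x i) - (y i - prev y i)) := by
  obtain ⟨hcont, hmono, hf0, hf1, hmem⟩ := hF
  have hn0 : (n : ℝ) ≠ 0 := by positivity
  set G : ℕ → ℝ := fun i => f (((n : ℝ) - i) / n) - ((n : ℝ) - i) / n with hG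
  set Z : ℕ → ℝ := fun i => if h : i < n then x ⟨i, h⟩ - y ⟨i, h⟩ else 0 with hZ
  set c : ℕ → ℝ := fun i => G i - G (i + 1) with hc
  have hZfin : ∀ i : Fin n, Z (i : ℕ) = x i - y i := by
    intro i; simp [hZ, i.isLt]
  have hGn : G n = 0 := by simp [hG, hf0]
  have hG0 : G 0 = 0 := by simp [hG, div_self hn0, hf1]
  have hsum : ∑ i : Fin n, (x i - y i) = 0 := by
    have h := hmean
    field_simp at h
    rw [Finset.sum_sub_distrib, h, sub_self]
  have step1 : W f x - W f y = ∑ i ∈ Finset.range n, c i * Z i := by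
    have h1 : W f x - W f y
        = ∑ i : Fin n, (f (((n : ℝ) - (i : ℕ)) / n) - f (((n : ℝ) - (i : ℕ) - 1) / n))
            * (x i - y i) := by
      unfold W
      rw [← Finset.sum_sub_distrib]
      refine Finset.sum_congr rfl fun i _ => by ring
    have h2 : ∑ i : Fin n, (1 / (n : ℝ)) * (x i - y i) = 0 := by
      rw [← Finset.mul_sum, hsum, mul_zero]
    have h3 : ∀ i : Fin n,
        c (i : ℕ) = (f (((n : ℝ) - (i : ℕ)) / n) - f (((n : ℝ) - (i : ℕ) - 1) / n))
          - 1 / (n : ℝ) := by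
      intro i
      simp only [hc, hG]
      push_cast
      have harg : ((n : ℝ) - ((i : ℕ) + 1)) = (n : ℝ) - (i : ℕ) - 1 := by ring
      rw [harg]
      field_simp
      ring
    rw [h1, ← sub_zero (∑ i : Fin n, _), ← h2, ← Finset.sum_sub_distrib]
    rw [← Fin.sum_univ_eq_sum_range (fun i => c i * Z i) n]
    refine Finset.sum_congr rfl fun i _ => ?_
    rw [hZfin, h3]
    ring
  have hIco : ∀ j < n, ∑ i ∈ Finset.Ico j n, c i = G j := by
    intro j hj
    rw [Finset.sum_Ico_eq_sum_range]
    have hck : ∀ k, c (j + k) = G (j + k) - G (j + (k + 1)) := by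
      intro k; simp only [hc, ← Nat.add_assoc]
    simp_rw [hck]
    rw [Finset.sum_range_sub' (fun k => G (j + k))]
    have hjn : j + (n - j) = n := by omega
    rw [hjn, hGn, sub_zero, Nat.add_zero]
  have hfilter : ∑ i ∈ Finset.univ.filter (fun i : Fin n => 1 ≤ (i : ℕ)),
        (f (((n : ℝ) - (i : ℕ)) / n) - ((n : ℝ) - (i : ℕ)) / n) *
          ((x i - prev x i) - (y i - prev y i))
      = ∑ i : Fin n, G (i : ℕ) *
          (Z (i : ℕ) - if (i : ℕ) = 0 then 0 else Z ((i : ℕ) - 1)) := by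
    rw [Finset.sum_filter]
    refine Finset.sum_congr rfl fun i _ => ?_
    by_cases h0 : (i : ℕ) = 0
    · have hg : G (i : ℕ) = 0 := by rw [h0]; exact hG0
      rw [if_neg (by omega), hg, zero_mul]
    · have h1 : 1 ≤ (i : ℕ) := by omega
      have hlt : (i : ℕ) - 1 < n := by have := i.isLt; omega
      rw [if_pos h1, if_neg h0]
      rw [hZfin]
      have hZp : Z ((i : ℕ) - 1) = x ⟨(i : ℕ) - 1, hlt⟩ - y ⟨(i : ℕ) - 1, hlt⟩ := by
        simp [hZ, hlt]
      rw [hZp]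
      simp only [prev, dif_neg h0, hG]
      ring
  rw [step1, abel_sum, hfilter,
    ← Fin.sum_univ_eq_sum_range
      (fun j => (∑ i ∈ Finset.Ico j n, c i) * (Z j - if j = 0 then 0 else Z (j - 1))) n]
  refine Finset.sum_congr rfl fun i _ => ?_
  rw [hIco (i : ℕ) i.isLt]
end

section
/- If x is obtained from y by a uniform-on-the-right-and-left (URL) progressive transfer, then for every f in the class F satisfying f(t) ≤ t for all t ∈ [0,1], the extended Gini social welfare satisfies W_f(x) ≥ W_f(y). -/
/-- `x` is obtained from `y` by a uniform-on-the-right-and-left (URL)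
progressive transfer. -/
def URLTransfer {n : ℕ} (x y : Fin n → ℝ) : Prop :=
  Monotone x ∧ Monotone y ∧ (∑ i : Fin n, x i) / n = (∑ i : Fin n, y i) / n ∧
  ∃ δ ε : ℝ, 0 < δ ∧ 0 < ε ∧ ∃ h k : Fin n, h < k ∧
    (∀ i : Fin n, i ≤ h → x i = y i + δ) ∧
    (∀ i : Fin n, h < i → i < k → x i = y i) ∧
    (∀ i : Fin n, k ≤ i → x i = y i - ε)

/-! With `g j = f ((n - j) / n)` (ranks counted from `0`), the weight of rank `j` in `W f` is
`g j - g (j + 1)`, so by telescoping the transfer changes welfare by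
`δ (g 0 - g (h + 1)) - ε (g k - g n) = δ (1 - g (h + 1)) - ε g k`.
Equal means force `(h + 1) δ = (n - k) ε`, while `f t ≤ t` gives `1 - g (h + 1) ≥ (h + 1) / n`
and `g k ≤ (n - k) / n`; so the gain is at least `δ (h + 1) / n - ε (n - k) / n = 0`. -/

open Finset

theorem Fin.sum_ite_val_lt {M : Type*} [AddCommMonoid M] {m n : ℕ} (hmn : m ≤ n) (a b : ℕ → M) :
    ∑ i : Fin n, (if (i : ℕ) < m then a i else b i) = ∑ j ∈ range m, a j + ∑ j ∈ Ico m n, b j := by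
  rw [Fin.sum_univ_eq_sum_range (fun j => if j < m then a j else b j),
    ← sum_range_add_sum_Ico _ hmn]
  congr 1
  · exact sum_congr rfl fun j hj => if_pos (mem_range.1 hj)
  · exact sum_congr rfl fun j hj => if_neg (not_lt.2 (mem_Ico.1 hj).1)

theorem Finset.sum_Ico_sub' {G : Type*} [AddCommGroup G] (g : ℕ → G) {k n : ℕ} (hkn : k ≤ n) :
    ∑ j ∈ Ico k n, (g j - g (j + 1)) = g k - g n := by
  rw [← neg_sub, ← sum_Ico_sub (f := g) hkn, ← sum_neg_distrib]
  simp only [neg_sub]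

theorem URLTransfer.sum_eq {n : ℕ} {x y : Fin n → ℝ} (hxy : URLTransfer x y) :
    ∑ i, x i = ∑ i, y i := by
  rcases Nat.eq_zero_or_pos n with rfl | hn
  · simp
  · exact (div_left_inj' (by positivity)).1 hxy.2.2.1

theorem URLTransfer.exists_sum_mul_sub {n : ℕ} {x y : Fin n → ℝ} (hxy : URLTransfer x y) :
    ∃ δ ε : ℝ, 0 < δ ∧ 0 < ε ∧ ∃ h k : ℕ, h < k ∧ k < n ∧ ∀ c : ℕ → ℝ,
      ∑ i : Fin n, c i * (x i - y i) = δ * ∑ j ∈ range (h + 1), c j - ε * ∑ j ∈ Ico k n, c j := by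
  obtain ⟨-, -, -, δ, ε, hδ, hε, h, k, hhk, hleft, hmid, hright⟩ := hxy
  refine ⟨δ, ε, hδ, hε, h, k, hhk, k.isLt, fun c => ?_⟩
  have hdiff : ∀ i : Fin n, c i * (x i - y i) =
      (if (i : ℕ) < h + 1 then δ * c i else 0) + (if (i : ℕ) < k then 0 else -(ε * c i)) := by
    intro i
    by_cases hih : i ≤ h
    · rw [hleft i hih, if_pos (Nat.lt_succ_of_le hih), if_pos (Fin.lt_def.1 (hih.trans_lt hhk))]
      ring
    by_cases hik : i < k
    · rw [hmid i (not_le.1 hih) hik, if_neg (mt Nat.le_of_lt_succ hih), if_pos (Fin.lt_def.1 hik)]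
      ring
    · rw [hright i (not_lt.1 hik), if_neg (mt Nat.le_of_lt_succ hih), if_neg (mt Fin.lt_def.2 hik)]
      ring
  rw [sum_congr rfl fun i _ => hdiff i, sum_add_distrib,
    Fin.sum_ite_val_lt (by omega) (fun j => δ * c j) (fun _ => 0),
    Fin.sum_ite_val_lt k.isLt.le (fun _ => 0) (fun j => -(ε * c j)),
    ← mul_sum, sum_neg_distrib, ← mul_sum, sum_const_zero, sum_const_zero]
  ring

/-- `(n - j) / n` is the population share of the individuals of rank `j` or higher. -/
noncomputable def upperShareValue (f : ℝ → ℝ) (n j : ℕ) : ℝ := f ((n - j : ℝ) / n)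

theorem W_sub_W {n : ℕ} (f : ℝ → ℝ) (x y : Fin n → ℝ) :
    W f x - W f y = ∑ i : Fin n,
      (upperShareValue f n i - upperShareValue f n (i + 1)) * (x i - y i) := by
  rw [W, W, ← sum_sub_distrib]
  refine sum_congr rfl fun i _ => ?_
  rw [upperShareValue, upperShareValue, Nat.cast_succ, ← sub_sub]
  ring

theorem upperShareValue_zero (f : ℝ → ℝ) {n : ℕ} (hn : n ≠ 0) : upperShareValue f n 0 = f 1 := by
  rw [upperShareValue, Nat.cast_zero, sub_zero, div_self (Nat.cast_ne_zero.2 hn)]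

theorem upperShareValue_self (f : ℝ → ℝ) (n : ℕ) : upperShareValue f n n = f 0 := by
  rw [upperShareValue, sub_self, zero_div]

theorem upperShareValue_le {f : ℝ → ℝ} (hf : ∀ t ∈ Set.Icc (0 : ℝ) 1, f t ≤ t) {n j : ℕ}
    (hj : j ≤ n) : upperShareValue f n j ≤ (n - j) / n := by
  have hjn : (j : ℝ) ≤ n := Nat.cast_le.2 hj
  exact hf _ ⟨div_nonneg (sub_nonneg.2 hjn) n.cast_nonneg,
    div_le_one_of_le₀ (sub_le_self _ j.cast_nonneg) n.cast_nonneg⟩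

theorem stmt12_general {n : ℕ} (x y : Fin n → ℝ)
    (hURL : URLTransfer x y)
    (f : ℝ → ℝ) (hF : MemF f) (hbelow : ∀ t ∈ Set.Icc (0 : ℝ) 1, f t ≤ t) :
    W f x ≥ W f y := by
  obtain ⟨-, -, hf0, hf1, -⟩ := hF
  obtain ⟨δ, ε, hδ, hε, h, k, hhk, hkn, hsum⟩ := hURL.exists_sum_mul_sub
  have hbalance : δ * (h + 1) = ε * (n - k) := by
    have := hsum 1
    simp only [Pi.one_apply, one_mul, sum_sub_distrib, hURL.sum_eq, sub_self, sum_const,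
      card_range, nsmul_eq_mul, Nat.cast_add, Nat.cast_one, mul_one, Nat.card_Ico,
      Nat.cast_sub hkn.le] at this
    linarith
  have hgain : W f x - W f y =
      δ * (1 - upperShareValue f n (h + 1)) - ε * upperShareValue f n k := by
    rw [W_sub_W, hsum fun j => upperShareValue f n j - upperShareValue f n (j + 1),
      sum_range_sub', sum_Ico_sub' _ hkn.le, upperShareValue_zero f (by omega),
      upperShareValue_self, hf0, hf1]
    ring
  set g := upperShareValue f n
  have hn : (0 : ℝ) < n := by exact_mod_cast (hhk.trans hkn).pos
  have hg_h : g (h + 1) ≤ (n - (h + 1)) / n := by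
    simpa using upperShareValue_le hbelow (show h + 1 ≤ n by omega)
  have hg_k : g k ≤ (n - k) / n := upperShareValue_le hbelow hkn.le
  have hloss_le_gain : ε * g k ≤ δ * (1 - g (h + 1)) := calc
    ε * g k ≤ ε * ((n - k) / n) := by gcongr
    _ = δ * ((h + 1) / n) := by rw [← mul_div_assoc, ← mul_div_assoc, hbalance]
    _ ≤ δ * (1 - g (h + 1)) := by
      gcongr
      rw [sub_div, div_self hn.ne'] at hg_h
      linarith
  linarith

theorem stmt12 {n : ℕ} (hn : 2 ≤ n) (x y : Fin n → ℝ)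
    (hURL : URLTransfer x y)
    (f : ℝ → ℝ) (hF : MemF f) (hbelow : ∀ t ∈ Set.Icc (0 : ℝ) 1, f t ≤ t) :
    W f x ≥ W f y :=
  stmt12_general x y hURL f hF hbelow
end

section
/- If x is obtained from y by a uniform-on-the-right (UR) progressive transfer, then for every f in the class F that is star-shaped from above at 0, the extended Gini social welfare satisfies W_f(x) ≥ W_f(y). -/
/-- `x` is obtained from `y` by a uniform-on-the-right (UR) progressive
transfer. Since indices are 0-based, position `k : Fin n` has `n - k`
individuals at or above it, so the mean-preservation condition reads
`δ = (n - k) · ε`. -/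
def URTransfer {n : ℕ} (x y : Fin n → ℝ) : Prop :=
  Monotone x ∧ Monotone y ∧
  ∃ δ ε : ℝ, 0 < δ ∧ 0 < ε ∧ ∃ h k : Fin n, h < k ∧
    x h = y h + δ ∧
    (∀ i : Fin n, k ≤ i → x i = y i - ε) ∧
    (∀ g : Fin n, g ≠ h → g < k → x g = y g) ∧
    δ = ((n : ℝ) - (k : ℕ)) * ε

/-- `f` is star-shaped (from above) at `ξ ∈ [0,1]`. -/
def StarShapedAt (f : ℝ → ℝ) (ξ : ℝ) : Prop :=
  ∀ s t : ℝ, s ∈ Set.Icc (0 : ℝ) 1 → t ∈ Set.Icc (0 : ℝ) 1 → s ≠ ξ → t ≠ ξ → s < t →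
    (f s - f ξ) / (s - ξ) ≤ (f t - f ξ) / (t - ξ)

/-!
In `W f x - W f y` the gain `δ` at position `h` is weighted by the increment of `f` over
`[a, b] = [(n-h-1)/n, (n-h)/n]`, while the weights of the losses `ε` from position `k` on
telescope to `f(t)` with `t = (n-k)/n`. Star-shapedness at `0` makes `f(s)/s`
nondecreasing, so the increment over `[a, b]` is at least `(b - a) f(t)/t`; as `t ≤ a`
and `δ = n t ε`, the gain dominates the loss.
-/

open Finset

lemma StarShapedAt.monotoneOn_div_self {f : ℝ → ℝ} (hstar : StarShapedAt f 0) (hf0 : f 0 = 0) :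
    MonotoneOn (fun s => f s / s) (Set.Ioc 0 1) := by
  intro s hs u hu hsu
  rcases hsu.eq_or_lt with rfl | hlt
  · rfl
  · simpa [hf0] using hstar s u ⟨hs.1.le, hs.2⟩ ⟨hu.1.le, hu.2⟩ hs.1.ne' hu.1.ne' hlt

lemma sub_mul_le_mul_sub_of_monotoneOn_div {f : ℝ → ℝ}
    (hf : MonotoneOn (fun s => f s / s) (Set.Ioc 0 1)) {t a b : ℝ}
    (ht : 0 < t) (hta : t ≤ a) (hab : a ≤ b) (hb : b ≤ 1) :
    (b - a) * f t ≤ t * (f b - f a) := by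
  have ha : 0 < a := ht.trans_le hta
  have hb₀ : 0 < b := ha.trans_le hab
  have hta' : f t / t ≤ f a / a := hf ⟨ht, hta.trans (hab.trans hb)⟩ ⟨ha, hab.trans hb⟩ hta
  have hab' : b * (f a / a) ≤ f b := by
    have := mul_le_mul_of_nonneg_left (hf ⟨ha, hab.trans hb⟩ ⟨hb₀, hb⟩ hab) hb₀.le
    rwa [mul_div_cancel₀ _ hb₀.ne'] at this
  calc (b - a) * f t = t * ((b - a) * (f t / t)) := by field_simp
    _ ≤ t * ((b - a) * (f a / a)) := by gcongr
    _ = t * (b * (f a / a) - f a) := by field_simp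
    _ ≤ t * (f b - f a) := by gcongr

lemma sum_Ico_sub_comp_sub_one (g : ℝ → ℝ) {k n : ℕ} (hk : k ≤ n) :
    ∑ i ∈ Ico k n, (g ((n : ℝ) - i) - g ((n : ℝ) - i - 1)) = g ((n : ℝ) - k) - g 0 := by
  rw [sum_Ico_eq_sum_range]
  convert sum_range_sub' (fun j : ℕ => g ((n : ℝ) - k - j)) (n - k) using 1
  · refine sum_congr rfl fun j _ => ?_
    push_cast
    ring_nf
  · simp [Nat.cast_sub hk]

lemma W_sub {n : ℕ} (f : ℝ → ℝ) (x y : Fin n → ℝ) : W f (x - y) = W f x - W f y := by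
  simp only [W, ← sum_sub_distrib, Pi.sub_apply, mul_sub]

lemma sum_Ici_W_weight {n : ℕ} (f : ℝ → ℝ) (k : Fin n) :
    ∑ i ∈ Ici k, (f (((n : ℝ) - (i : ℕ)) / n) - f (((n : ℝ) - (i : ℕ) - 1) / n))
      = f (((n : ℝ) - (k : ℕ)) / n) - f 0 := by
  have := sum_map (Ici k) Fin.valEmbedding
    fun i : ℕ => f (((n : ℝ) - i) / n) - f (((n : ℝ) - i - 1) / n)
  rw [Fin.map_valEmbedding_Ici] at this
  rw [← zero_div (n : ℝ)]
  exact this.symm.trans (sum_Ico_sub_comp_sub_one (fun s => f (s / n)) k.is_le')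

lemma URTransfer.W_sub_W {n : ℕ} {x y : Fin n → ℝ} (hUR : URTransfer x y) (f : ℝ → ℝ) :
    ∃ ε > 0, ∃ h k : Fin n, h < k ∧ W f x - W f y =
      ε * (((n : ℝ) - (k : ℕ)) * (f (((n : ℝ) - (h : ℕ)) / n) - f (((n : ℝ) - (h : ℕ) - 1) / n))
        - (f (((n : ℝ) - (k : ℕ)) / n) - f 0)) := by
  obtain ⟨-, -, δ, ε, -, hε, h, k, hhk, hxh, hge, hother, rfl⟩ := hUR
  refine ⟨ε, hε, h, k, hhk, ?_⟩
  have hxy : x - y = fun i => (if i = h then ((n : ℝ) - (k : ℕ)) * ε else 0)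
      - (if k ≤ i then ε else 0) := by
    funext i
    by_cases hki : k ≤ i
    · simp [hge i hki, hki, (hhk.trans_le hki).ne']
    · by_cases hih : i = h
      · subst hih
        simp [hxh, hki]
      · simp [hother i hih (not_le.mp hki), hih, hki]
  rw [← W_sub, hxy, W]
  simp only [mul_sub, mul_ite, mul_zero]
  rw [sum_sub_distrib, sum_ite_eq', if_pos (mem_univ h), ← sum_filter, filter_le_eq_Ici,
    ← sum_mul, sum_Ici_W_weight]
  ring

theorem stmt13_general {n : ℕ} (x y : Fin n → ℝ)
    (hUR : URTransfer x y)
    (f : ℝ → ℝ) (hF : MemF f) (hstar : StarShapedAt f 0) :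
    W f x ≥ W f y := by
  obtain ⟨ε, hε, h, k, hhk, hW⟩ := hUR.W_sub_W f
  have hkn : (k : ℝ) + 1 ≤ n := by exact_mod_cast k.isLt
  have hhk' : (h : ℝ) + 1 ≤ k := by exact_mod_cast hhk
  have hh : (0 : ℝ) ≤ h := h.val.cast_nonneg
  have hn : (0 : ℝ) < n := by linarith
  set t : ℝ := ((n : ℝ) - (k : ℕ)) / n with ht
  set a : ℝ := ((n : ℝ) - (h : ℕ) - 1) / n with ha
  set b : ℝ := ((n : ℝ) - (h : ℕ)) / n with hb
  have hslope : (b - a) * f t ≤ t * (f b - f a) :=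
    sub_mul_le_mul_sub_of_monotoneOn_div (hstar.monotoneOn_div_self hF.2.2.1)
      (div_pos (by linarith) hn) (div_le_div_of_nonneg_right (by linarith) hn.le)
      (div_le_div_of_nonneg_right (by linarith) hn.le) (by rw [div_le_one hn]; linarith)
  have hfactor : ((n : ℝ) - (k : ℕ)) * (f b - f a) - f t = n * (t * (f b - f a) - (b - a) * f t) := by
    rw [ht, ha, hb]
    field_simp
    ring
  rw [ge_iff_le, ← sub_nonneg, hW, hF.2.2.1, sub_zero, hfactor]
  exact mul_nonneg hε.le (mul_nonneg hn.le (sub_nonneg.mpr hslope))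

theorem stmt13 {n : ℕ} (hn : 2 ≤ n) (x y : Fin n → ℝ)
    (hUR : URTransfer x y)
    (f : ℝ → ℝ) (hF : MemF f) (hstar : StarShapedAt f 0) :
    W f x ≥ W f y :=
  stmt13_general x y hUR f hF hstar
end

section
/- If x is obtained from y by a uniform-on-the-right-and-left (URL) progressive transfer, then x can be obtained from y by a finite sequence of Pigou-Dalton progressive transfers. -/
open Relation

theorem exists_seq_of_reflTransGen {α : Type*} {r : α → α → Prop} {a b : α}
    (h : ReflTransGen r a b) :
    ∃ (m : ℕ) (z : ℕ → α), z 0 = a ∧ z m = b ∧ ∀ j : ℕ, j < m → r (z j) (z (j + 1)) := by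
  induction h with
  | refl => exact ⟨0, fun _ => a, rfl, rfl, by simp⟩
  | @tail b c _ hbc ih =>
    obtain ⟨m, z, hz0, hzm, hz⟩ := ih
    refine ⟨m + 1, fun j => if j ≤ m then z j else c, by simpa, by simp, fun j hj => ?_⟩
    rcases Nat.lt_succ_iff_lt_or_eq.1 hj with hjm | rfl
    · simpa [hjm.le, Nat.succ_le_of_lt hjm] using hz j hjm
    · simpa [hzm] using hbc

theorem monotone_of_sandwich {n : ℕ} {x z : Fin n → ℝ} (hx : Monotone x) {u K : ℕ}
    (hle : ∀ i : Fin n, (i : ℕ) < K → z i ≤ x i) (hge : ∀ i : Fin n, u ≤ (i : ℕ) → x i ≤ z i)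
    (hlow : ∀ i j : Fin n, (i : ℕ) + 1 = j → (j : ℕ) < u → z i ≤ z j)
    (hhigh : ∀ i j : Fin n, (i : ℕ) + 1 = j → K ≤ (i : ℕ) → z i ≤ z j) :
    Monotone z := by
  cases n with
  | zero => exact fun i => i.elim0
  | succ n =>
    refine Fin.monotone_iff_le_succ.2 fun i => ?_
    have hsucc : (i.castSucc : ℕ) + 1 = i.succ := by simp
    by_cases hu : (i.succ : ℕ) < u
    · exact hlow _ _ hsucc hu
    by_cases hK : K ≤ (i.castSucc : ℕ)
    · exact hhigh _ _ hsucc hK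
    calc z i.castSucc ≤ x i.castSucc := hle _ (by omega)
      _ ≤ x i.succ := hx Fin.castSucc_lt_succ.le
      _ ≤ z i.succ := hge _ (by omega)

noncomputable def transferBlocks {n : ℕ} (y : Fin n → ℝ) (l a K b : ℕ) (δ ε : ℝ) (i : Fin n) : ℝ :=
  y i + (Set.Ico l (l + a)).indicator (fun _ => δ) i - (Set.Ico K (K + b)).indicator (fun _ => ε) i

section transferBlocks

variable {n : ℕ} {y : Fin n → ℝ}

theorem sum_indicator_Ico_val {l a : ℕ} (hla : l + a ≤ n) (c : ℝ) :
    ∑ i : Fin n, (Set.Ico l (l + a)).indicator (fun _ => c) (i : ℕ) = a * c := by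
  rw [Fin.sum_univ_eq_sum_range (fun i => (Set.Ico l (l + a)).indicator (fun _ => c) i),
    ← Finset.coe_Ico, Finset.sum_indicator_subset _ (fun i hi => by simp at hi ⊢; omega)]
  simp

theorem sum_transferBlocks {l a K b : ℕ} (hla : l + a ≤ n) (hKb : K + b ≤ n) (δ ε : ℝ) :
    ∑ i, transferBlocks y l a K b δ ε i = ∑ i, y i + a * δ - b * ε := by
  simp only [transferBlocks, Finset.sum_sub_distrib, Finset.sum_add_distrib,
    sum_indicator_Ico_val hla, sum_indicator_Ico_val hKb]

theorem transferBlocks_top_receiver {l a K b : ℕ} (δ c ε : ℝ) :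
    transferBlocks (transferBlocks y (l + a) 1 K b δ c) l a K b δ (ε - c) =
      transferBlocks y l (a + 1) K b δ ε := by
  funext i
  simp only [transferBlocks, Set.indicator_apply, Set.mem_Ico]
  split_ifs <;> first | omega | ring

theorem transferBlocks_bottom_giver {h K b : ℕ} (δ ε : ℝ) :
    transferBlocks (transferBlocks y h 1 K 1 ε ε) h 1 (K + 1) b (δ - ε) ε =
      transferBlocks y h 1 K (b + 1) δ ε := by
  funext i
  simp only [transferBlocks, Set.indicator_apply, Set.mem_Ico]
  split_ifs <;> first | omega | ring

theorem pigouDalton_transferBlocks_one_one {h K : ℕ} (hhK : h < K) (hK : K < n) {ε : ℝ}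
    (hε : 0 < ε) (hy : Monotone y) (hz : Monotone (transferBlocks y h 1 K 1 ε ε)) :
    PigouDalton (transferBlocks y h 1 K 1 ε ε) y := by
  refine ⟨hz, hy, ε, hε, ⟨h, hhK.trans hK⟩, ⟨K, hK⟩, hhK, ?_, ?_, fun g hgh hgK => ?_⟩
  · simp [transferBlocks, hhK.not_ge]
  · simp [transferBlocks, hhK.not_ge]
  · have hgh : (g : ℕ) ≠ h := fun e => hgh (Fin.ext e)
    have hgK : (g : ℕ) ≠ K := fun e => hgK (Fin.ext e)
    simp only [transferBlocks, Set.indicator_apply, Set.mem_Ico]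
    split_ifs <;> first | omega | ring

theorem monotone_transferBlocks_of_le {l a K b l' a' b' : ℕ} {δ ε α β : ℝ} (hy : Monotone y)
    (hx : Monotone (transferBlocks y l a K b δ ε)) (haK : l + a ≤ K) (hl : l ≤ l')
    (ha : l' + a' = l + a) (hb : b' ≤ b) (hα : 0 ≤ α) (hαδ : α ≤ δ) (hβ : 0 ≤ β) (hβε : β ≤ ε) :
    Monotone (transferBlocks y l' a' K b' α β) := by
  refine monotone_of_sandwich hx (u := l + a) (K := K) (fun i hi => ?_) (fun i hi => ?_)
    (fun i j hij hj => ?_) (fun i j hij hi => ?_) <;>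
    simp only [transferBlocks, Set.indicator_apply, Set.mem_Ico]
  · split_ifs <;> first | omega | linarith
  · split_ifs <;> first | omega | linarith
  all_goals
    have := hy (Fin.le_def.2 (by omega : (i : ℕ) ≤ j))
    split_ifs <;> first | omega | linarith

theorem reflTransGen_transferBlocks_single_receiver {h K b : ℕ} {δ ε : ℝ} (hy : Monotone y)
    (hb : 1 ≤ b) (hhK : h < K) (hKb : K + b ≤ n) (hε : 0 < ε) (hbal : δ = b * ε)
    (hx : Monotone (transferBlocks y h 1 K b δ ε)) :
    ReflTransGen (flip PigouDalton) y (transferBlocks y h 1 K b δ ε) := by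
  induction b, hb using Nat.le_induction generalizing y K δ with
  | base =>
    rw [hbal, Nat.cast_one, one_mul] at hx ⊢
    exact .single (pigouDalton_transferBlocks_one_one hhK (by omega) hε hy hx)
  | succ b hb ih =>
    push_cast at hbal
    have hw : Monotone (transferBlocks y h 1 K 1 ε ε) :=
      monotone_transferBlocks_of_le hy hx (by omega) le_rfl rfl (by omega) hε.le
        (by nlinarith) hε.le le_rfl
    rw [← transferBlocks_bottom_giver] at hx ⊢
    exact .head (pigouDalton_transferBlocks_one_one hhK (by omega) hε hy hw)
      (ih hw (by omega) (by omega) (by linarith) hx)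

theorem reflTransGen_transferBlocks {l a K b : ℕ} {δ ε : ℝ} (hy : Monotone y) (ha : 1 ≤ a)
    (haK : l + a ≤ K) (hKb : K + b ≤ n) (hδ : 0 < δ) (hε : 0 < ε) (hbal : a * δ = b * ε)
    (hx : Monotone (transferBlocks y l a K b δ ε)) :
    ReflTransGen (flip PigouDalton) y (transferBlocks y l a K b δ ε) := by
  have hb : 1 ≤ b := by
    refine Nat.one_le_iff_ne_zero.2 fun hb => ?_
    have : (0 : ℝ) < a * δ := mul_pos (by exact_mod_cast ha) hδ
    rw [hbal, hb, Nat.cast_zero, zero_mul] at this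
    exact this.false
  induction a, ha using Nat.le_induction generalizing y ε with
  | base =>
    rw [Nat.cast_one, one_mul] at hbal
    exact reflTransGen_transferBlocks_single_receiver hy hb haK hKb hε hbal hx
  | succ a ha ih =>
    push_cast at hbal
    have hbR : (0 : ℝ) < b := by exact_mod_cast hb
    set c := δ / b with hc_def
    have hδc : δ = b * c := by rw [hc_def]; field_simp
    have hc : 0 < c := div_pos hδ hbR
    have hεc : ε = (a + 1) * c := mul_left_cancel₀ hbR.ne' (by rw [← hbal, hδc]; ring)
    have hcε : c < ε := by
      have : (0 : ℝ) < a * c := mul_pos (by exact_mod_cast ha) hc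
      linarith
    have hw : Monotone (transferBlocks y (l + a) 1 K b δ c) :=
      monotone_transferBlocks_of_le hy hx (by omega) (by omega) (by omega) le_rfl hδ.le le_rfl
        hc.le hcε.le
    rw [← transferBlocks_top_receiver δ c ε] at hx ⊢
    exact (reflTransGen_transferBlocks_single_receiver hy hb (by omega) hKb hc hδc hw).trans
      (ih hw (by omega) (sub_pos.2 hcε) (by rw [hεc, hδc]; ring) hx)

end transferBlocks

theorem stmt15_general {n : ℕ} (x y : Fin n → ℝ)
    (hURL : URLTransfer x y) :
    ∃ (m : ℕ) (z : ℕ → Fin n → ℝ), z 0 = y ∧ z m = x ∧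
      ∀ j : ℕ, j < m → PigouDalton (z (j + 1)) (z j) := by
  obtain ⟨hx, hy, hmean, δ, ε, hδ, hε, h, k, hhk, hrecv, hmid, hgive⟩ := hURL
  have hxy : x = transferBlocks y 0 (h + 1) k (n - k) δ ε := by
    funext i
    simp only [transferBlocks, Set.indicator_apply, Set.mem_Ico]
    rcases (by omega : i ≤ h ∨ h < i ∧ i < k ∨ k ≤ i) with hi | ⟨hhi, hik⟩ | hi
    · rw [hrecv i hi]; split_ifs <;> first | omega | ring
    · rw [hmid i hhi hik]; split_ifs <;> first | omega | ring
    · rw [hgive i hi]; split_ifs <;> first | omega | ring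
  have hbal : ((h + 1 : ℕ) : ℝ) * δ = ((n - k : ℕ) : ℝ) * ε := by
    have hsum := sum_transferBlocks (y := y) (l := 0) (a := h + 1) (K := k) (b := n - k)
      (by omega) (by omega) δ ε
    rw [← hxy, (div_left_inj' (Nat.cast_ne_zero.2 h.pos.ne')).1 hmean] at hsum
    linarith
  subst hxy
  exact exists_seq_of_reflTransGen
    (reflTransGen_transferBlocks hy (by omega) (by omega) (by omega) hδ hε hbal hx)

theorem stmt15 {n : ℕ} (hn : 2 ≤ n) (x y : Fin n → ℝ)
    (hURL : URLTransfer x y) :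
    ∃ (m : ℕ) (z : ℕ → Fin n → ℝ), z 0 = y ∧ z m = x ∧
      ∀ j : ℕ, j < m → PigouDalton (z (j + 1)) (z j) :=
  stmt15_general x y hURL
end

section
/- If x is obtained from y by a uniform-on-the-right (UR) progressive transfer, then x can be obtained from y by a finite sequence of Pigou-Dalton progressive transfers. -/
theorem stmt16 {n : ℕ} (hn : 2 ≤ n) (x y : Fin n → ℝ)
    (hUR : URTransfer x y) :
    ∃ (m : ℕ) (z : ℕ → Fin n → ℝ), z 0 = y ∧ z m = x ∧
      ∀ j : ℕ, j < m → PigouDalton (z (j + 1)) (z j) := by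
  obtain ⟨hxm, hym, δ, ε, hδ, hε, h, k, hhk, hxh, hxk, hxg, hδε⟩ := hUR
  have hkn : k.val < n := k.isLt
  set m := n - k.val with hm
  have hkm : k.val + m = n := by omega
  have hmδ : δ = (m : ℝ) * ε := by
    rw [hδε]
    congr 1
    rw [hm, Nat.cast_sub hkn.le]
  set z : ℕ → Fin n → ℝ := fun j i =>
    if i = h then y h + j * ε
    else if k.val ≤ i.val ∧ i.val < k.val + j then y i - ε else y i with hz
  -- basic facts
  have hhk' : h.val < k.val := hhk
  -- x b ≤ z j b for b ≠ h
  have hxzb : ∀ (j : ℕ) (b : Fin n), b ≠ h → x b ≤ z j b := by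
    intro j b hbh
    simp only [hz, if_neg hbh]
    by_cases hbk : k.val ≤ b.val ∧ b.val < k.val + j
    · rw [if_pos hbk, hxk b (Fin.le_def.mpr hbk.1)]
    · rw [if_neg hbk]
      by_cases hbk2 : k.val ≤ b.val
      · rw [hxk b (Fin.le_def.mpr hbk2)]; linarith
      · rw [hxg b hbh (Fin.lt_def.mpr (by omega))]
  have key : ∀ j, j ≤ m → Monotone (z j) := by
    intro j hj a b hab
    rcases eq_or_lt_of_le hab with rfl | hab'
    · exact le_rfl
    have hjε : (j : ℝ) * ε ≤ δ := by
      rw [hmδ]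
      exact mul_le_mul_of_nonneg_right (by exact_mod_cast hj) hε.le
    have hjε0 : 0 ≤ (j : ℝ) * ε := by positivity
    by_cases hah : a = h
    · have hbh : b ≠ h := by
        intro e; rw [e, ← hah] at hab'; exact absurd hab' (lt_irrefl _)
      have hxb : x a ≤ x b := hxm hab'.le
      have hza : z j a = y h + j * ε := by simp only [hz, if_pos hah]
      rw [hza]
      calc y h + (j : ℝ) * ε ≤ y h + δ := by linarith
        _ = x h := hxh.symm
        _ = x a := by rw [hah]
        _ ≤ x b := hxb
        _ ≤ z j b := hxzb j b hbh
    · by_cases hbh : b = h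
      · have hak : a.val < h.val := by rw [← hbh]; exact hab'
        have hza : z j a = y a := by
          simp only [hz, if_neg hah]
          rw [if_neg]
          rintro ⟨h1, _⟩
          omega
        have hzb : z j b = y h + j * ε := by simp only [hz, if_pos hbh]
        rw [hza, hzb]
        have : y a ≤ y b := hym hab'.le
        rw [hbh] at this
        linarith
      · simp only [hz, if_neg hah, if_neg hbh]
        have hyab : y a ≤ y b := hym hab'.le
        by_cases hak : k.val ≤ a.val ∧ a.val < k.val + j
        · rw [if_pos hak]
          by_cases hbk : k.val ≤ b.val ∧ b.val < k.val + j
          · rw [if_pos hbk]; linarith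
          · rw [if_neg hbk]; linarith
        · rw [if_neg hak]
          by_cases hbk : k.val ≤ b.val ∧ b.val < k.val + j
          · rw [if_pos hbk]
            have hav : a.val < b.val := hab'
            have hak2 : a.val < k.val := by omega
            have hxa : x a = y a := hxg a hah (Fin.lt_def.mpr hak2)
            have hxb : x b = y b - ε := hxk b (Fin.le_def.mpr hbk.1)
            have := hxm hab'.le
            rw [hxa, hxb] at this
            linarith
          · rw [if_neg hbk]; exact hyab
  refine ⟨m, z, ?_, ?_, ?_⟩
  · funext i
    by_cases hih : i = h
    · simp [hz, hih]
    · simp only [hz, if_neg hih]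
      rw [if_neg]
      rintro ⟨h1, h2⟩
      omega
  · funext i
    by_cases hih : i = h
    · subst hih
      simp only [hz, if_pos rfl]
      rw [hxh, hmδ]
    · simp only [hz, if_neg hih]
      by_cases hik : k.val ≤ i.val
      · rw [if_pos ⟨hik, by omega⟩, hxk i (Fin.le_def.mpr hik)]
      · rw [if_neg (by rintro ⟨h1, _⟩; omega),
          hxg i hih (Fin.lt_def.mpr (by omega))]
  · intro j hjm
    refine ⟨key (j + 1) (by omega), key j (by omega), ε, hε,
      h, ⟨k.val + j, by omega⟩, Fin.lt_def.mpr (by simp; omega), ?_, ?_, ?_⟩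
    · have hkh : (⟨k.val + j, by omega⟩ : Fin n) ≠ h := by
        intro e
        have := congrArg Fin.val e
        simp at this
        omega
      simp only [hz, if_pos rfl]
      push_cast
      ring
    · have hkh : (⟨k.val + j, by omega⟩ : Fin n) ≠ h := by
        intro e
        have := congrArg Fin.val e
        simp at this
        omega
      simp only [hz, if_neg hkh]
      rw [if_pos ⟨by simp, by simp⟩, if_neg (by simp)]
    · intro g hgh hgk
      have hgv : g.val ≠ k.val + j := by
        intro e
        exact hgk (Fin.ext e)
      simp only [hz, if_neg hgh]
      by_cases hgb : k.val ≤ g.val ∧ g.val < k.val + j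
      · rw [if_pos hgb, if_pos ⟨hgb.1, by omega⟩]
      · rw [if_neg hgb, if_neg (by rintro ⟨h1, h2⟩; exact hgb ⟨h1, by omega⟩)]
end

section
/- If x is obtained from y by a uniform-on-the-left (UL) progressive transfer, then x can be obtained from y by a finite sequence of Pigou-Dalton progressive transfers. -/
lemma mono_of_adj {n : ℕ} (f : Fin n → ℝ)
    (H : ∀ a b : Fin n, (a : ℕ) + 1 = (b : ℕ) → f a ≤ f b) : Monotone f := by
  intro a b hab
  obtain ⟨d, hd⟩ : ∃ d, (b : ℕ) = (a : ℕ) + d := ⟨(b : ℕ) - (a : ℕ), by omega⟩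
  clear hab
  induction d generalizing b with
  | zero => have : a = b := Fin.ext (by omega); simp [this]
  | succ d ih =>
    have hb' : (a : ℕ) + d < n := lt_of_le_of_lt (by omega) b.isLt
    set b' : Fin n := ⟨(a : ℕ) + d, hb'⟩ with hb'def
    have h1 : f a ≤ f b' := ih (show (b' : ℕ) = (a : ℕ) + d from rfl)
    exact h1.trans (H b' b (by simp [hb'def]; omega))

/-- `x` is obtained from `y` by a uniform-on-the-left (UL) progressive
transfer. Since indices are 0-based, position `h : Fin n` has `h + 1`
individuals at or below it, so the mean-preservation condition reads
`(h + 1) · δ = ε`. -/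
def ULTransfer {n : ℕ} (x y : Fin n → ℝ) : Prop :=
  Monotone x ∧ Monotone y ∧
  ∃ δ ε : ℝ, 0 < δ ∧ 0 < ε ∧ ∃ h k : Fin n, h < k ∧
    (∀ i : Fin n, i ≤ h → x i = y i + δ) ∧
    x k = y k - ε ∧
    (∀ g : Fin n, h < g → g ≠ k → x g = y g) ∧
    ((h : ℕ) + 1 : ℝ) * δ = ε

theorem stmt17 {n : ℕ} (hn : 2 ≤ n) (x y : Fin n → ℝ)
    (hUL : ULTransfer x y) :
    ∃ (m : ℕ) (z : ℕ → Fin n → ℝ), z 0 = y ∧ z m = x ∧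
      ∀ j : ℕ, j < m → PigouDalton (z (j + 1)) (z j) := by
  obtain ⟨hmx, hmy, δ, ε, hδ, hε, h, k, hhk, hle, hxk, hgt, hsum⟩ := hUL
  set hv : ℕ := (h : ℕ) with hhv
  have hhkv : hv < (k : ℕ) := hhk
  -- the chain of distributions
  set z : ℕ → Fin n → ℝ := fun j i =>
    if hv + 1 ≤ (i : ℕ) + j ∧ (i : ℕ) ≤ hv then y i + δ
    else if i = k then y k - (j : ℝ) * δ else y i with hz
  refine ⟨hv + 1, z, ?_, ?_, ?_⟩
  · -- z 0 = y
    funext i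
    simp only [hz]
    split_ifs with h1 h2
    · omega
    · subst h2; simp
    · rfl
  · -- z (hv+1) = x
    funext i
    simp only [hz]
    split_ifs with h1 h2
    · exact (hle i (Fin.le_def.mpr h1.2)).symm
    · subst h2
      rw [hxk, ← hsum]
      push_cast
      ring
    · have hgi : hv < (i : ℕ) := by omega
      exact (hgt i (Fin.lt_def.mpr hgi) h2).symm
  · -- each step is Pigou-Dalton
    intro j hj
    -- auxiliary real inequalities
    have hjle : ∀ j' : ℕ, j' ≤ hv + 1 → (j' : ℝ) * δ ≤ ε := by
      intro j' hj'
      rw [← hsum]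
      have : (j' : ℝ) ≤ (hv : ℝ) + 1 := by exact_mod_cast hj'
      nlinarith
    have hxik : ∀ i : Fin n, i ≤ k → x i ≤ x k := fun i hi => hmx hi
    -- y i + δ ≤ y k - j'·δ for i ≤ h
    have hA : ∀ (j' : ℕ), j' ≤ hv + 1 → ∀ i : Fin n, (i : ℕ) ≤ hv →
        y i + δ ≤ y k - (j' : ℝ) * δ := by
      intro j' hj' i hi
      have h1 : x i = y i + δ := hle i (Fin.le_def.mpr hi)
      have h2 : x i ≤ x k := hmx (Fin.le_def.mpr (by omega))
      have h3 := hjle j' hj'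
      rw [h1, hxk] at h2
      linarith
    have hB : ∀ (j' : ℕ), j' ≤ hv + 1 → ∀ i : Fin n, (i : ℕ) < (k : ℕ) →
        y i ≤ y k - (j' : ℝ) * δ := by
      intro j' hj' i hi
      by_cases hih : (i : ℕ) ≤ hv
      · have := hA j' hj' i hih; linarith
      · have h1 : x i = y i := hgt i (Fin.lt_def.mpr (by omega)) (by
          intro hik; rw [hik] at hi; omega)
        have h2 : x i ≤ x k := hmx (Fin.le_def.mpr (by omega))
        have h3 := hjle j' hj'
        rw [h1, hxk] at h2
        linarith
    -- monotonicity of each z j' for j' ≤ hv + 1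
    have hmono : ∀ j' : ℕ, j' ≤ hv + 1 → Monotone (z j') := by
      intro j' hj'
      apply mono_of_adj
      intro a b hab
      have hyab : y a ≤ y b := hmy (Fin.le_def.mpr (by omega))
      have hjd0 : (0 : ℝ) ≤ (j' : ℝ) * δ := by positivity
      simp only [hz]
      split_ifs with c1 c2 c3 c4 c5 c6 c7 c8
      · linarith
      · exact hA j' hj' a c1.2
      · -- a in region, b outside region, b ≠ k
        have hb : hv < (b : ℕ) := by omega
        have h1 : x a = y a + δ := hle a (Fin.le_def.mpr c1.2)
        have h2 : x b = y b := hgt b (Fin.lt_def.mpr hb) c3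
        have h3 : x a ≤ x b := hmx (Fin.le_def.mpr (by omega))
        linarith
      · -- a = k, b in region: impossible
        exfalso
        have := congrArg Fin.val c4
        omega
      · -- a = k, b = k: impossible
        exfalso
        have h1 := congrArg Fin.val c4
        have h2 := congrArg Fin.val c6
        omega
      · -- a = k, b ≠ k outside region
        rw [c4] at hyab
        linarith
      · -- a not in region, a ≠ k, b in region
        linarith
      · -- a not in region, a ≠ k, b = k
        have h1 := congrArg Fin.val c8
        have hak : (a : ℕ) < (k : ℕ) := by omega
        exact hB j' hj' a hak
      · linarith
    have hj1 : j + 1 ≤ hv + 1 := hj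
    have hjle1 : j ≤ hv + 1 := by omega
    refine ⟨hmono (j + 1) hj1, hmono j hjle1, δ, hδ, ?_⟩
    have hpn : hv - j < n := lt_of_le_of_lt (by omega) (lt_of_lt_of_le hhkv (by omega))
    refine ⟨⟨hv - j, hpn⟩, k, Fin.lt_def.mpr (by simp only []; exact by omega), ?_, ?_, ?_⟩
    · -- z (j+1) p = z j p + δ
      have hpk : (⟨hv - j, hpn⟩ : Fin n) ≠ k := by
        intro hc
        have := congrArg Fin.val hc
        simp only [] at this
        omega
      have e1 : hv + 1 ≤ ((⟨hv - j, hpn⟩ : Fin n) : ℕ) + (j + 1) ∧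
          ((⟨hv - j, hpn⟩ : Fin n) : ℕ) ≤ hv := by simp only []; omega
      have e2 : ¬(hv + 1 ≤ ((⟨hv - j, hpn⟩ : Fin n) : ℕ) + j ∧
          ((⟨hv - j, hpn⟩ : Fin n) : ℕ) ≤ hv) := by simp only []; omega
      simp only [hz]
      rw [if_pos e1, if_neg e2, if_neg hpk]
    · -- z (j+1) k = z j k - δ
      have e1 : ¬(hv + 1 ≤ (k : ℕ) + (j + 1) ∧ (k : ℕ) ≤ hv) := by omega
      have e2 : ¬(hv + 1 ≤ (k : ℕ) + j ∧ (k : ℕ) ≤ hv) := by omega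
      simp only [hz]
      rw [if_neg e1, if_neg e2]
      norm_num
      push_cast
      ring
    · intro g hg1 hg2
      have hgval : (g : ℕ) ≠ hv - j := by
        intro hc; exact hg1 (Fin.ext (by simp only [hc]))
      simp only [hz]
      split_ifs <;>
        first
          | rfl
          | exact absurd (by assumption : g = k) hg2
          | (exfalso; apply hgval; omega)
          | (exfalso; omega)
end

section
/- Let f belong to the class F. If for every n ≥ 2 and every pair of nondecreasing distributions x, y of size n such that x is obtained from y by a Pigou-Dalton progressive transfer one has W_f(x) ≥ W_f(y), then f is convex on [0,1]. -/
lemma stepA (f : ℝ → ℝ)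
    (h : ∀ n : ℕ, 2 ≤ n → ∀ x y : Fin n → ℝ, PigouDalton x y → W f x ≥ W f y)
    (n : ℕ) (hn : 2 ≤ n) (hh kk : Fin n) (hlt : hh < kk) :
    f (((n : ℝ) - (kk : ℕ)) / n) - f (((n : ℝ) - (kk : ℕ) - 1) / n) ≤
    f (((n : ℝ) - (hh : ℕ)) / n) - f (((n : ℝ) - (hh : ℕ) - 1) / n) := by
  set c : Fin n → ℝ := fun i => f (((n : ℝ) - (i : ℕ)) / n) - f (((n : ℝ) - (i : ℕ) - 1) / n)
    with hc
  set y : Fin n → ℝ := fun i => ((i : ℕ) : ℝ) with hy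
  set x : Fin n → ℝ := fun i => if i = hh then ((hh : ℕ) : ℝ) + 1/2 else
    if i = kk then ((kk : ℕ) : ℝ) - 1/2 else ((i : ℕ) : ℝ) with hx
  have hne : hh ≠ kk := ne_of_lt hlt
  have lb : ∀ i : Fin n, ((i : ℕ) : ℝ) - 1/2 ≤ x i := by
    intro i
    simp only [hx]
    split_ifs with h1 h2
    · subst h1; linarith
    · subst h2; linarith
    · linarith
  have ub : ∀ i : Fin n, x i ≤ ((i : ℕ) : ℝ) + 1/2 := by
    intro i
    simp only [hx]
    split_ifs with h1 h2
    · subst h1; linarith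
    · subst h2; linarith
    · linarith
  have monox : Monotone x := by
    intro i j hij
    rcases eq_or_lt_of_le hij with rfl | hij
    · exact le_refl _
    · have : ((i : ℕ) : ℝ) + 1 ≤ ((j : ℕ) : ℝ) := by exact_mod_cast Nat.succ_le_of_lt hij
      calc x i ≤ ((i : ℕ) : ℝ) + 1/2 := ub i
        _ ≤ ((j : ℕ) : ℝ) - 1/2 := by linarith
        _ ≤ x j := lb j
  have monoy : Monotone y := by
    intro i j hij
    simp only [hy]
    exact_mod_cast hij
  have hPD : PigouDalton x y := by
    refine ⟨monox, monoy, 1/2, by norm_num, hh, kk, hlt, ?_, ?_, ?_⟩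
    · simp [hx, hy]
    · simp [hx, hy, hne.symm]
    · intro g hg1 hg2; simp [hx, hy, hg1, hg2]
  have hW := h n hn x y hPD
  have hdiff : W f x - W f y = c hh * (1/2) - c kk * (1/2) := by
    rw [W, W, ← Finset.sum_sub_distrib]
    have hterm : ∀ i : Fin n, c i * x i - c i * y i = c i * (x i - y i) := fun i => by ring
    calc (∑ i : Fin n, (c i * x i - c i * y i)) = ∑ i : Fin n, c i * (x i - y i) := by
          exact Finset.sum_congr rfl fun i _ => hterm i
      _ = ∑ i ∈ ({hh, kk} : Finset (Fin n)), c i * (x i - y i) := by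
          refine (Finset.sum_subset (Finset.subset_univ _) ?_).symm
          intro i _ hi
          simp only [Finset.mem_insert, Finset.mem_singleton, not_or] at hi
          have : x i = y i := by simp [hx, hy, hi.1, hi.2]
          rw [this]; ring
      _ = c hh * (x hh - y hh) + c kk * (x kk - y kk) := Finset.sum_pair hne
      _ = c hh * (1/2) - c kk * (1/2) := by
          have h1 : x hh - y hh = 1/2 := by simp [hx, hy]
          have h2 : x kk - y kk = -(1/2) := by simp [hx, hy, hne.symm]
          rw [h1, h2]; ring
  have h0 : (0:ℝ) ≤ c hh * (1/2) - c kk * (1/2) := by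
    rw [← hdiff]; linarith [hW]
  show c kk ≤ c hh
  clear_value c x y
  linarith [h0]

lemma stepB (f : ℝ → ℝ)
    (h : ∀ n : ℕ, 2 ≤ n → ∀ x y : Fin n → ℝ, PigouDalton x y → W f x ≥ W f y)
    (n : ℕ) (hn : 2 ≤ n) (i j : ℕ) (hij : i ≤ j) (hj : j < n) :
    f (((i : ℝ) + 1) / n) - f ((i : ℝ) / n) ≤ f (((j : ℝ) + 1) / n) - f ((j : ℝ) / n) := by
  rcases eq_or_lt_of_le hij with rfl | hij
  · exact le_refl _
  · have hi : i < n := lt_trans hij hj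
    have hlt : (⟨n - 1 - j, by omega⟩ : Fin n) < (⟨n - 1 - i, by omega⟩ : Fin n) := by
      simp only [Fin.mk_lt_mk]; omega
    have := stepA f h n hn ⟨n - 1 - j, by omega⟩ ⟨n - 1 - i, by omega⟩ hlt
    have c1 : ((n - 1 - i : ℕ) : ℝ) = (n : ℝ) - ((i : ℝ) + 1) := by
      have e : (n - 1 - i : ℕ) = n - (i + 1) := by omega
      rw [e, Nat.cast_sub (by omega)]; push_cast; ring
    have c2 : ((n - 1 - j : ℕ) : ℝ) = (n : ℝ) - ((j : ℝ) + 1) := by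
      have e : (n - 1 - j : ℕ) = n - (j + 1) := by omega
      rw [e, Nat.cast_sub (by omega)]; push_cast; ring
    simp only [c1, c2] at this
    have e2 : (n : ℝ) - ((n : ℝ) - ((i : ℝ) + 1)) - 1 = (i : ℝ) := by ring
    have e1 : (n : ℝ) - ((n : ℝ) - ((i : ℝ) + 1)) = (i : ℝ) + 1 := by ring
    have e4 : (n : ℝ) - ((n : ℝ) - ((j : ℝ) + 1)) - 1 = (j : ℝ) := by ring
    have e3 : (n : ℝ) - ((n : ℝ) - ((j : ℝ) + 1)) = (j : ℝ) + 1 := by ring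
    rw [e2, e1, e4, e3] at this
    exact this

lemma gridkey (f : ℝ → ℝ)
    (h : ∀ n : ℕ, 2 ≤ n → ∀ x y : Fin n → ℝ, PigouDalton x y → W f x ≥ W f y)
    (n : ℕ) (hn : 2 ≤ n) (u v w : ℕ) (huv : u < v) (hvw : v ≤ w) (hw : w ≤ n) :
    ((w : ℝ) / n - (v : ℝ) / n) * (f ((v : ℝ) / n) - f ((u : ℝ) / n)) ≤
    ((v : ℝ) / n - (u : ℝ) / n) * (f ((w : ℝ) / n) - f ((v : ℝ) / n)) := by
  set G : ℕ → ℝ := fun t => f ((t : ℝ) / n) with hG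
  set g : ℕ → ℝ := fun t => G (t + 1) - G t with hg
  have gmono : ∀ i j : ℕ, i ≤ j → j < n → g i ≤ g j := by
    intro i j hij hj
    have := stepB f h n hn i j hij hj
    simp only [hg, hG]
    push_cast
    convert this using 3 <;> push_cast <;> ring
  have tele : ∀ a b : ℕ, ∑ t ∈ Finset.range b, g t - ∑ t ∈ Finset.range a, g t = G b - G a := by
    intro a b
    rw [Finset.sum_range_sub (f := G), Finset.sum_range_sub (f := G)]
    ring
  have teleIco : ∀ a b : ℕ, a ≤ b → ∑ t ∈ Finset.Ico a b, g t = G b - G a := by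
    intro a b hab
    rw [Finset.sum_Ico_eq_sub _ hab, tele]
  have hv1 : v - 1 < n := by omega
  have upper : G v - G u ≤ ((v : ℝ) - u) * g (v - 1) := by
    rw [← teleIco u v huv.le]
    have := Finset.sum_le_card_nsmul (Finset.Ico u v) g (g (v - 1))
      (fun t ht => by
        rw [Finset.mem_Ico] at ht
        exact gmono t (v - 1) (by omega) hv1)
    rw [Nat.card_Ico, nsmul_eq_mul, Nat.cast_sub huv.le] at this
    exact this
  have lower : ((w : ℝ) - v) * g (v - 1) ≤ G w - G v := by
    rw [← teleIco v w hvw]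
    have := Finset.card_nsmul_le_sum (Finset.Ico v w) g (g (v - 1))
      (fun t ht => by
        rw [Finset.mem_Ico] at ht
        exact gmono (v - 1) t (by omega) (by omega))
    rw [Nat.card_Ico, nsmul_eq_mul, Nat.cast_sub hvw] at this
    exact this
  have h1 : (0 : ℝ) ≤ (w : ℝ) - v := by
    have : (v : ℝ) ≤ w := by exact_mod_cast hvw
    linarith
  have h2 : (0 : ℝ) ≤ (v : ℝ) - u := by
    have : (u : ℝ) ≤ v := by exact_mod_cast huv.le
    linarith
  have keymul : ((w : ℝ) - v) * (G v - G u) ≤ ((v : ℝ) - u) * (G w - G v) := by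
    nlinarith [upper, lower, h1, h2]
  have hn0 : (0 : ℝ) < n := by positivity
  have e1 : ((w : ℝ) / n - (v : ℝ) / n) * (f ((v : ℝ) / n) - f ((u : ℝ) / n)) =
      (((w : ℝ) - v) * (G v - G u)) / n := by simp only [hG]; ring
  have e2 : ((v : ℝ) / n - (u : ℝ) / n) * (f ((w : ℝ) / n) - f ((v : ℝ) / n)) =
      (((v : ℝ) - u) * (G w - G v)) / n := by simp only [hG]; ring
  rw [e1, e2]
  gcongr

open Filter Topology

lemma key (f : ℝ → ℝ) (hcont : ContinuousOn f (Set.Icc 0 1))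
    (h : ∀ n : ℕ, 2 ≤ n → ∀ x y : Fin n → ℝ, PigouDalton x y → W f x ≥ W f y)
    (a b c : ℝ) (ha : a ∈ Set.Icc (0:ℝ) 1) (hc : c ∈ Set.Icc (0:ℝ) 1)
    (hab : a < b) (hbc : b < c) :
    (c - b) * (f b - f a) ≤ (b - a) * (f c - f b) := by
  obtain ⟨ha0, ha1⟩ := ha
  obtain ⟨hc0, hc1⟩ := hc
  have hb : b ∈ Set.Icc (0:ℝ) 1 := ⟨le_trans ha0 hab.le, le_trans hbc.le hc1⟩
  set u : ℕ → ℕ := fun N => (⌈a * N⌉).toNat with hu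
  set v : ℕ → ℕ := fun N => (⌈b * N⌉).toNat with hv
  set w : ℕ → ℕ := fun N => (⌊c * N⌋).toNat with hw
  -- eventual largeness conditions
  have t1 : Tendsto (fun N : ℕ => (b - a) * N) atTop atTop :=
    Tendsto.const_mul_atTop (by linarith) tendsto_natCast_atTop_atTop
  have t2 : Tendsto (fun N : ℕ => (c - b) * N) atTop atTop :=
    Tendsto.const_mul_atTop (by linarith) tendsto_natCast_atTop_atTop
  have ev1 : ∀ᶠ N : ℕ in atTop, a * N + 1 < b * N := by
    filter_upwards [t1.eventually_gt_atTop 1] with N h1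
    nlinarith [h1]
  have ev2 : ∀ᶠ N : ℕ in atTop, b * N + 2 ≤ c * N := by
    filter_upwards [t2.eventually_ge_atTop 2] with N h1
    nlinarith [h1]
  have evN : ∀ᶠ N : ℕ in atTop, 2 ≤ N := eventually_ge_atTop 2
  -- basic cast facts
  have hucast : ∀ N : ℕ, 0 < N → ((u N : ℕ) : ℝ) = (⌈a * N⌉ : ℝ) := by
    intro N hN
    have h0 : (0:ℤ) ≤ ⌈a * (N:ℝ)⌉ := Int.ceil_nonneg (by positivity)
    simp only [hu]
    exact_mod_cast congrArg (fun z : ℤ => (z : ℝ)) (Int.toNat_of_nonneg h0)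
  have hvcast : ∀ N : ℕ, 0 < N → ((v N : ℕ) : ℝ) = (⌈b * N⌉ : ℝ) := by
    intro N hN
    have hb0 : (0:ℝ) ≤ b := le_trans ha0 hab.le
    have h0 : (0:ℤ) ≤ ⌈b * (N:ℝ)⌉ := Int.ceil_nonneg (by positivity)
    simp only [hv]
    exact_mod_cast congrArg (fun z : ℤ => (z : ℝ)) (Int.toNat_of_nonneg h0)
  have hwcast : ∀ N : ℕ, 0 < N → ((w N : ℕ) : ℝ) = (⌊c * N⌋ : ℝ) := by
    intro N hN
    have : (0:ℝ) ≤ c * N := by positivity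
    have h0 : (0:ℤ) ≤ ⌊c * (N:ℝ)⌋ := Int.floor_nonneg.mpr this
    simp only [hw]
    exact_mod_cast congrArg (fun z : ℤ => (z : ℝ)) (Int.toNat_of_nonneg h0)
  -- ordering eventually
  have evuv : ∀ᶠ N : ℕ in atTop, u N < v N := by
    filter_upwards [ev1, evN] with N h1 h2
    have hN : 0 < N := by omega
    have : ((u N : ℕ) : ℝ) < ((v N : ℕ) : ℝ) := by
      rw [hucast N hN, hvcast N hN]
      calc (⌈a * N⌉ : ℝ) < a * N + 1 := Int.ceil_lt_add_one _
        _ < b * N := h1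
        _ ≤ ⌈b * N⌉ := Int.le_ceil _
    exact_mod_cast this
  have evvw : ∀ᶠ N : ℕ in atTop, v N ≤ w N := by
    filter_upwards [ev2, evN] with N h1 h2
    have hN : 0 < N := by omega
    have : ((v N : ℕ) : ℝ) ≤ ((w N : ℕ) : ℝ) := by
      rw [hvcast N hN, hwcast N hN]
      calc (⌈b * N⌉ : ℝ) ≤ b * N + 1 := (Int.ceil_lt_add_one _).le
        _ ≤ c * N - 1 := by linarith
        _ ≤ ⌊c * N⌋ := by linarith [Int.lt_floor_add_one (c * (N:ℝ))]
    exact_mod_cast this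
  have evwN : ∀ᶠ N : ℕ in atTop, w N ≤ N := by
    filter_upwards [evN] with N h2
    have hN : 0 < N := by omega
    have : ((w N : ℕ) : ℝ) ≤ (N : ℝ) := by
      rw [hwcast N hN]
      calc (⌊c * N⌋ : ℝ) ≤ c * N := Int.floor_le _
        _ ≤ 1 * N := by nlinarith [Nat.cast_nonneg (α := ℝ) N]
        _ = N := by ring
    exact_mod_cast this
  -- value bounds and limits
  have hN1 : ∀ᶠ N : ℕ in atTop, 0 < N := eventually_gt_atTop 0
  have ubound : ∀ᶠ N : ℕ in atTop, a ≤ (u N : ℝ) / N ∧ (u N : ℝ) / N ≤ a + 1 / N := by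
    filter_upwards [hN1] with N hN
    have hNR : (0:ℝ) < N := by exact_mod_cast hN
    constructor
    · rw [le_div_iff₀ hNR, hucast N hN]; exact Int.le_ceil _ |>.trans_eq rfl
    · rw [div_le_iff₀ hNR, hucast N hN]
      have := Int.ceil_lt_add_one (a * (N:ℝ))
      have : (⌈a * N⌉ : ℝ) ≤ a * N + 1 := by linarith
      calc (⌈a * (N:ℝ)⌉ : ℝ) ≤ a * N + 1 := this
        _ = (a + 1/N) * N := by field_simp
  have vbound : ∀ᶠ N : ℕ in atTop, b ≤ (v N : ℝ) / N ∧ (v N : ℝ) / N ≤ b + 1 / N := by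
    filter_upwards [hN1] with N hN
    have hNR : (0:ℝ) < N := by exact_mod_cast hN
    constructor
    · rw [le_div_iff₀ hNR, hvcast N hN]; exact Int.le_ceil _
    · rw [div_le_iff₀ hNR, hvcast N hN]
      have := Int.ceil_lt_add_one (b * (N:ℝ))
      calc (⌈b * (N:ℝ)⌉ : ℝ) ≤ b * N + 1 := by linarith
        _ = (b + 1/N) * N := by field_simp
  have wbound : ∀ᶠ N : ℕ in atTop, c - 1 / N ≤ (w N : ℝ) / N ∧ (w N : ℝ) / N ≤ c := by
    filter_upwards [hN1] with N hN
    have hNR : (0:ℝ) < N := by exact_mod_cast hN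
    constructor
    · rw [le_div_iff₀ hNR, hwcast N hN]
      have := Int.lt_floor_add_one (c * (N:ℝ))
      calc (c - 1/N) * N = c * N - 1 := by field_simp
        _ ≤ ⌊c * N⌋ := by linarith
    · rw [div_le_iff₀ hNR, hwcast N hN]; exact Int.floor_le _
  have hinv : Tendsto (fun N : ℕ => 1 / (N:ℝ)) atTop (𝓝 0) :=
    tendsto_one_div_atTop_nhds_zero_nat
  have tendu : Tendsto (fun N : ℕ => (u N : ℝ) / N) atTop (𝓝 a) := by
    apply tendsto_of_tendsto_of_tendsto_of_le_of_le' tendsto_const_nhds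
      (by simpa using tendsto_const_nhds.add hinv : Tendsto (fun N : ℕ => a + 1/(N:ℝ)) atTop (𝓝 a))
    · filter_upwards [ubound] with N h; exact h.1
    · filter_upwards [ubound] with N h; exact h.2
  have tendv : Tendsto (fun N : ℕ => (v N : ℝ) / N) atTop (𝓝 b) := by
    apply tendsto_of_tendsto_of_tendsto_of_le_of_le' tendsto_const_nhds
      (by simpa using tendsto_const_nhds.add hinv : Tendsto (fun N : ℕ => b + 1/(N:ℝ)) atTop (𝓝 b))
    · filter_upwards [vbound] with N h; exact h.1
    · filter_upwards [vbound] with N h; exact h.2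
  have tendw : Tendsto (fun N : ℕ => (w N : ℝ) / N) atTop (𝓝 c) := by
    apply tendsto_of_tendsto_of_tendsto_of_le_of_le'
      (by simpa using tendsto_const_nhds.sub hinv : Tendsto (fun N : ℕ => c - 1/(N:ℝ)) atTop (𝓝 c))
      tendsto_const_nhds
    · filter_upwards [wbound] with N h; exact h.1
    · filter_upwards [wbound] with N h; exact h.2
  -- membership in Icc eventually
  have memu : ∀ᶠ N : ℕ in atTop, (u N : ℝ) / N ∈ Set.Icc (0:ℝ) 1 := by
    filter_upwards [evuv, evvw, evwN, hN1] with N h1 h2 h3 hN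
    have hNR : (0:ℝ) < N := by exact_mod_cast hN
    refine ⟨by positivity, ?_⟩
    rw [div_le_one hNR]
    exact_mod_cast le_trans (le_trans h1.le h2) h3
  have memv : ∀ᶠ N : ℕ in atTop, (v N : ℝ) / N ∈ Set.Icc (0:ℝ) 1 := by
    filter_upwards [evvw, evwN, hN1] with N h2 h3 hN
    have hNR : (0:ℝ) < N := by exact_mod_cast hN
    refine ⟨by positivity, ?_⟩
    rw [div_le_one hNR]
    exact_mod_cast le_trans h2 h3
  have memw : ∀ᶠ N : ℕ in atTop, (w N : ℝ) / N ∈ Set.Icc (0:ℝ) 1 := by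
    filter_upwards [evwN, hN1] with N h3 hN
    have hNR : (0:ℝ) < N := by exact_mod_cast hN
    exact ⟨by positivity, by rw [div_le_one hNR]; exact_mod_cast h3⟩
  -- f composed tendsto
  have tfu : Tendsto (fun N : ℕ => f ((u N : ℝ) / N)) atTop (𝓝 (f a)) := by
    refine (hcont a ⟨ha0, ha1⟩).tendsto.comp ?_
    rw [tendsto_nhdsWithin_iff]
    exact ⟨tendu, memu⟩
  have tfv : Tendsto (fun N : ℕ => f ((v N : ℝ) / N)) atTop (𝓝 (f b)) := by
    refine (hcont b hb).tendsto.comp ?_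
    rw [tendsto_nhdsWithin_iff]
    exact ⟨tendv, memv⟩
  have tfw : Tendsto (fun N : ℕ => f ((w N : ℝ) / N)) atTop (𝓝 (f c)) := by
    refine (hcont c ⟨hc0, hc1⟩).tendsto.comp ?_
    rw [tendsto_nhdsWithin_iff]
    exact ⟨tendw, memw⟩
  -- conclude
  have tL : Tendsto (fun N : ℕ => ((w N : ℝ)/N - (v N : ℝ)/N) * (f ((v N : ℝ)/N) - f ((u N : ℝ)/N)))
      atTop (𝓝 ((c - b) * (f b - f a))) := (tendw.sub tendv).mul (tfv.sub tfu)
  have tR : Tendsto (fun N : ℕ => ((v N : ℝ)/N - (u N : ℝ)/N) * (f ((w N : ℝ)/N) - f ((v N : ℝ)/N)))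
      atTop (𝓝 ((b - a) * (f c - f b))) := (tendv.sub tendu).mul (tfw.sub tfv)
  refine le_of_tendsto_of_tendsto tL tR ?_
  filter_upwards [evuv, evvw, evwN, evN] with N h1 h2 h3 h4
  exact gridkey f h N h4 (u N) (v N) (w N) h1 h2 h3

theorem stmt19 (f : ℝ → ℝ) (hF : MemF f)
    (h : ∀ n : ℕ, 2 ≤ n → ∀ x y : Fin n → ℝ, PigouDalton x y → W f x ≥ W f y) :
    ConvexOn ℝ (Set.Icc 0 1) f := by
  obtain ⟨hcont, -, -, -, -⟩ := hF
  apply convexOn_of_slope_mono_adjacent (convex_Icc 0 1)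
  intro x y z hx hz hxy hyz
  have k := key f hcont h x y z hx hz hxy hyz
  rw [div_le_div_iff₀ (by linarith) (by linarith)]
  linear_combination k
end
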